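/- arXiv:1101.0021 — 6 statements merged into one kernel-verified Lean document; each statement's English description precedes it below -/
import Mathlib

section
/- Let M be a b-matching of an instance (G,b,r) and let P be a path of type (1) with respect to M, with initial agent a_1 and first house h_1. Set P' = P if a_1 is unsaturated in M, and P' = P ∪ {e} otherwise, where e ∈ M is an edge incident with a_1 with r(e) > r(a_1,h_1) (note e ∉ P). Then M ⊕ P' is a b-matching that is more popular than M; in particular M is not popular. -/
open Finset

section Core

variable {A H : Type*} [DecidableEq A] [DecidableEq H]

/-- The degree of an agent `a` in an edge set `M`. -/
def adeg (M : Finset (A × H)) (a : A) : ℕ := (M.filter fun e => e.1 = a).card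

/-- The degree of a house `h` in an edge set `M`. -/
def hdeg (M : Finset (A × H)) (h : H) : ℕ := (M.filter fun e => e.2 = h).card

/-- `M` is a b-matching of the instance with edge set `E` and capacities `bA` on agents
and `bH` on houses. -/
def IsBM (E : Finset (A × H)) (bA : A → ℕ) (bH : H → ℕ) (M : Finset (A × H)) : Prop :=
  M ⊆ E ∧ (∀ a : A, adeg M a ≤ bA a) ∧ (∀ h : H, hdeg M h ≤ bH h)

/-- The `i`-th entry of the signature of agent `a` in `M`: the number of rank-`i` edges
of `M` incident with `a`. -/
def cnt (rk : A × H → ℕ) (M : Finset (A × H)) (a : A) (i : ℕ) : ℕ :=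
  (M.filter fun e => e.1 = a ∧ rk e = i).card

/-- Agent `a` prefers `M'` to `M`: the signature of `a` in `M'` is lexicographically
greater than its signature in `M`. -/
def Prefers (rk : A × H → ℕ) (M' M : Finset (A × H)) (a : A) : Prop :=
  ∃ j : ℕ, (∀ i < j, cnt rk M' a i = cnt rk M a i) ∧ cnt rk M a j < cnt rk M' a j

/-- `M'` is more popular than `M`: strictly more agents prefer `M'` to `M` than
prefer `M` to `M'`. -/
def MorePop [Fintype A] (rk : A × H → ℕ) (M' M : Finset (A × H)) : Prop :=
  Nat.card {a : A // Prefers rk M M' a} < Nat.card {a : A // Prefers rk M' M a}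

/-- `M` is a popular b-matching. -/
def Popular [Fintype A] (E : Finset (A × H)) (bA : A → ℕ) (bH : H → ℕ) (rk : A × H → ℕ)
    (M : Finset (A × H)) : Prop :=
  IsBM E bA bH M ∧ ∀ M' : Finset (A × H), IsBM E bA bH M' → ¬ MorePop rk M' M

/-- An even path with respect to `M`, with vertex sequence
`a 0, h 0, a 1, h 1, …, a k, h k`: it is alternating, its first edge `(a 0, h 0)` is not
in `M`, no edge is repeated, and for each `i`, the `M`-edge `(h i, a (i+1))` has the same
rank as the following non-`M`-edge `(a (i+1), h (i+1))`.  It is the even path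
`P_e(a 0, h k)`; extended by a further `M`-edge `(h k, a')` it yields `P_e(a 0, a')`. -/
structure EvenPath (E M : Finset (A × H)) (rk : A × H → ℕ) (k : ℕ) where
  a : Fin (k + 1) → A
  h : Fin (k + 1) → H
  fwd_mem : ∀ i : Fin (k + 1), (a i, h i) ∈ E
  fwd_not : ∀ i : Fin (k + 1), (a i, h i) ∉ M
  bwd_mem : ∀ i : Fin k, (a i.succ, h i.castSucc) ∈ M
  rank_eq : ∀ i : Fin k, rk (a i.succ, h i.castSucc) = rk (a i.succ, h i.succ)
  fwd_inj : ∀ i j : Fin (k + 1), (a i, h i) = (a j, h j) → i = j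
  bwd_inj : ∀ i j : Fin k, (a i.succ, h i.castSucc) = (a j.succ, h j.castSucc) → i = j

namespace EvenPath

variable {E M : Finset (A × H)} {rk : A × H → ℕ} {k : ℕ}

/-- The non-`M`-edges of an even path. -/
def fwdEdges (P : EvenPath E M rk k) : Finset (A × H) :=
  Finset.univ.image fun i : Fin (k + 1) => (P.a i, P.h i)

/-- The `M`-edges of an even path. -/
def bwdEdges (P : EvenPath E M rk k) : Finset (A × H) :=
  Finset.univ.image fun i : Fin k => (P.a i.succ, P.h i.castSucc)

/-- All edges of an even path. -/
def edges (P : EvenPath E M rk k) : Finset (A × H) := P.fwdEdges ∪ P.bwdEdges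

end EvenPath

/-- The condition on the starting agent `a0` (with first house `h0`) of paths of
types (1), (2) and (3): `a0` is unsaturated, or `M` contains an edge incident with `a0`
of rank (strictly) worse than that of `(a0, h0)`. -/
def StartCond (bA : A → ℕ) (rk : A × H → ℕ) (M : Finset (A × H)) (a0 : A) (h0 : H) : Prop :=
  adeg M a0 ≠ bA a0 ∨ ∃ e ∈ M, e.1 = a0 ∧ rk (a0, h0) < rk e

/-- A path of type (1) with respect to `M`: `(P_e(a_1, h_{k-1}), a_k, h_k, a_{k+1})`. -/
structure Type1 (E M : Finset (A × H)) (bA : A → ℕ) (rk : A × H → ℕ) where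
  k : ℕ
  P : EvenPath E M rk k
  ak : A
  hk : H
  ak1 : A
  mem2 : (ak, hk) ∈ E
  e1 : (ak, P.h (Fin.last k)) ∈ M
  e2 : (ak, hk) ∉ M
  e3 : (ak1, hk) ∈ M
  start : StartCond bA rk M (P.a 0) (P.h 0)
  rdrop : rk (ak, hk) < rk (ak, P.h (Fin.last k))
  dcase : (P.a 0 ≠ ak ∧ P.a 0 ≠ ak1 ∧ ak ≠ ak1) ∨
      (P.a 0 ≠ ak ∧ P.a 0 = ak1 ∧ rk (P.a 0, P.h 0) < rk (P.a 0, hk))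
  ne1 : (ak, P.h (Fin.last k)) ∉ P.bwdEdges
  ne2 : (ak, hk) ∉ P.fwdEdges
  ne3 : (ak1, hk) ∉ P.bwdEdges ∧ (ak1, hk) ≠ (ak, P.h (Fin.last k))

/-- The edge set of a path of type (1). -/
def Type1.edges {E M : Finset (A × H)} {bA : A → ℕ} {rk : A × H → ℕ}
    (T : Type1 E M bA rk) : Finset (A × H) :=
  T.P.edges ∪ {(T.ak, T.P.h (Fin.last T.k)), (T.ak, T.hk), (T.ak1, T.hk)}

/-- A path of type (2) with respect to `M`: `(P_e(a_1, a), P_e^r(a, a'_1))`, two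
edge-disjoint even paths both ending at the same agent `am`. -/
structure Type2 (E M : Finset (A × H)) (bA : A → ℕ) (rk : A × H → ℕ) where
  k : ℕ
  k' : ℕ
  P : EvenPath E M rk k
  P' : EvenPath E M rk k'
  am : A
  cl : (am, P.h (Fin.last k)) ∈ M
  cl' : (am, P'.h (Fin.last k')) ∈ M
  clne : (am, P.h (Fin.last k)) ∉ P.bwdEdges
  clne' : (am, P'.h (Fin.last k')) ∉ P'.bwdEdges
  start : StartCond bA rk M (P.a 0) (P.h 0)
  start' : StartCond bA rk M (P'.a 0) (P'.h 0)
  dist : P.a 0 ≠ am ∧ P'.a 0 ≠ am ∧ P.a 0 ≠ P'.a 0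
  disj : Disjoint (P.edges ∪ {(am, P.h (Fin.last k))}) (P'.edges ∪ {(am, P'.h (Fin.last k'))})

/-- The edge set of a path of type (2). -/
def Type2.edges {E M : Finset (A × H)} {bA : A → ℕ} {rk : A × H → ℕ}
    (T : Type2 E M bA rk) : Finset (A × H) :=
  (T.P.edges ∪ {(T.am, T.P.h (Fin.last T.k))}) ∪
    (T.P'.edges ∪ {(T.am, T.P'.h (Fin.last T.k'))})

/-- A path of type (3) with respect to `M`: an even path `P_e(a_1, h)` ending at an
unsaturated house `h`. -/
structure Type3 (E M : Finset (A × H)) (bA : A → ℕ) (bH : H → ℕ) (rk : A × H → ℕ) where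
  k : ℕ
  P : EvenPath E M rk k
  start : StartCond bA rk M (P.a 0) (P.h 0)
  unsat : hdeg M (P.h (Fin.last k)) ≠ bH (P.h (Fin.last k))

/-- A path of type (4) with respect to `M`: a closed alternating path
`(P_e(a_1, h_k), a_1)` with `rk (h_k, a_1) > rk (a_1, h_1)`. -/
structure Type4 (E M : Finset (A × H)) (rk : A × H → ℕ) where
  k : ℕ
  P : EvenPath E M rk k
  cl : (P.a 0, P.h (Fin.last k)) ∈ M
  clne : (P.a 0, P.h (Fin.last k)) ∉ P.bwdEdges
  rgt : rk (P.a 0, P.h 0) < rk (P.a 0, P.h (Fin.last k))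

/-- The edge set of a path of type (4). -/
def Type4.edges {E M : Finset (A × H)} {rk : A × H → ℕ} (T : Type4 E M rk) :
    Finset (A × H) :=
  T.P.edges ∪ {(T.P.a 0, T.P.h (Fin.last T.k))}

end Core


section Aux

open Finset

variable {A H : Type*} [DecidableEq A] [DecidableEq H]
variable {E M : Finset (A × H)} {bA : A → ℕ} {bH : H → ℕ} {rk : A × H → ℕ}

lemma card_filter_image_fin {n : ℕ} (f : Fin n → A × H) (hf : Function.Injective f)
    (p : A × H → Prop) [DecidablePred p] :
    (((univ : Finset (Fin n)).image f).filter p).card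
      = ∑ i : Fin n, if p (f i) then 1 else 0 := by
  rw [Finset.filter_image, Finset.card_image_of_injective _ hf, Finset.card_filter]

lemma symmDiff_filter_card (M P' : Finset (A × H)) (p : A × H → Prop) [DecidablePred p] :
    ((symmDiff M P').filter p).card + ((M ∩ P').filter p).card
      = (M.filter p).card + ((P' \ M).filter p).card := by
  have h1 : symmDiff M P' = (M \ P') ∪ (P' \ M) := symmDiff_def M P'
  have h2 : (M.filter p).card = ((M \ P').filter p).card + ((M ∩ P').filter p).card := by
    conv_lhs => rw [(Finset.sdiff_union_inter M P').symm]
    rw [filter_union, card_union_of_disjoint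
      (Finset.disjoint_filter_filter (Finset.disjoint_sdiff_inter M P'))]
  rw [h1, filter_union, card_union_of_disjoint
    (Finset.disjoint_filter_filter disjoint_sdiff_sdiff), h2]
  ring

lemma prefers_asymm (rk : A × H → ℕ) (M M' : Finset (A × H)) (a : A)
    (h : Prefers rk M' M a) : ¬ Prefers rk M M' a := by
  obtain ⟨j, hj, hlt⟩ := h
  rintro ⟨j', hj', hlt'⟩
  rcases lt_trichotomy j j' with hc | rfl | hc
  · have := hj' j hc; omega
  · omega
  · have := hj j' hc; omega

lemma EvenPath.card_filter_fwd {k : ℕ} (P : EvenPath E M rk k)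
    (p : A × H → Prop) [DecidablePred p] :
    (P.fwdEdges.filter p).card = ∑ i : Fin (k + 1), if p (P.a i, P.h i) then 1 else 0 :=
  card_filter_image_fin _ (fun i j hij => P.fwd_inj i j hij) p

lemma EvenPath.card_filter_bwd {k : ℕ} (P : EvenPath E M rk k)
    (p : A × H → Prop) [DecidablePred p] :
    (P.bwdEdges.filter p).card
      = ∑ i : Fin k, if p (P.a i.succ, P.h i.castSucc) then 1 else 0 :=
  card_filter_image_fin _ (fun i j hij => P.bwd_inj i j hij) p

namespace Type1

variable (T : Type1 E M bA rk)

lemma inter_edges :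
    M ∩ T.edges = T.P.bwdEdges ∪ {(T.ak, T.P.h (Fin.last T.k)), (T.ak1, T.hk)} := by
  ext x
  simp only [mem_inter, Type1.edges, EvenPath.edges, EvenPath.fwdEdges, EvenPath.bwdEdges,
    mem_union, mem_image, mem_univ, true_and, mem_insert, mem_singleton]
  constructor
  · rintro ⟨hxM, (⟨i, rfl⟩ | ⟨i, rfl⟩) | rfl | rfl | rfl⟩
    · exact absurd hxM (T.P.fwd_not i)
    · exact Or.inl ⟨i, rfl⟩
    · exact Or.inr (Or.inl rfl)
    · exact absurd hxM T.e2
    · exact Or.inr (Or.inr rfl)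
  · rintro (⟨i, rfl⟩ | rfl | rfl)
    · exact ⟨T.P.bwd_mem i, Or.inl (Or.inr ⟨i, rfl⟩)⟩
    · exact ⟨T.e1, Or.inr (Or.inl rfl)⟩
    · exact ⟨T.e3, Or.inr (Or.inr (Or.inr rfl))⟩

lemma sdiff_edges : T.edges \ M = T.P.fwdEdges ∪ {(T.ak, T.hk)} := by
  ext x
  simp only [mem_sdiff, Type1.edges, EvenPath.edges, EvenPath.fwdEdges, EvenPath.bwdEdges,
    mem_union, mem_image, mem_univ, true_and, mem_insert, mem_singleton]
  constructor
  · rintro ⟨(⟨i, rfl⟩ | ⟨i, rfl⟩) | rfl | rfl | rfl, hxM⟩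
    · exact Or.inl ⟨i, rfl⟩
    · exact absurd (T.P.bwd_mem i) hxM
    · exact absurd T.e1 hxM
    · exact Or.inr rfl
    · exact absurd T.e3 hxM
  · rintro (⟨i, rfl⟩ | rfl)
    · exact ⟨Or.inl (Or.inl ⟨i, rfl⟩), T.P.fwd_not i⟩
    · exact ⟨Or.inr (Or.inr (Or.inl rfl)), T.e2⟩

lemma edges_subset (hME : M ⊆ E) : T.edges ⊆ E := by
  intro x hx
  simp only [Type1.edges, EvenPath.edges, EvenPath.fwdEdges, EvenPath.bwdEdges, mem_union,
    mem_image, mem_univ, true_and, mem_insert, mem_singleton] at hx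
  rcases hx with (⟨i, rfl⟩ | ⟨i, rfl⟩) | rfl | rfl | rfl
  · exact T.P.fwd_mem i
  · exact hME (T.P.bwd_mem i)
  · exact hME T.e1
  · exact T.mem2
  · exact hME T.e3

lemma count_Y {ex P' : Finset (A × H)} (hsub : ex ⊆ M) (hP' : P' = ex ∪ T.edges)
    (p : A × H → Prop) [DecidablePred p] :
    ((P' \ M).filter p).card
      = (∑ i : Fin (T.k + 1), if p (T.P.a i, T.P.h i) then 1 else 0)
        + (if p (T.ak, T.hk) then 1 else 0) := by
  have h : P' \ M = T.P.fwdEdges ∪ {(T.ak, T.hk)} := by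
    rw [hP', union_sdiff_distrib, Finset.sdiff_eq_empty_iff_subset.mpr hsub, empty_union,
      T.sdiff_edges]
  have hdisj : Disjoint T.P.fwdEdges ({(T.ak, T.hk)} : Finset (A × H)) :=
    Finset.disjoint_singleton_right.mpr T.ne2
  rw [h, filter_union, card_union_of_disjoint (Finset.disjoint_filter_filter hdisj),
    EvenPath.card_filter_fwd, Finset.filter_singleton]
  congr 1
  split <;> simp

lemma count_X {ex P' : Finset (A × H)} (hsub : ex ⊆ M) (hdisj : Disjoint ex T.edges)
    (hP' : P' = ex ∪ T.edges) (p : A × H → Prop) [DecidablePred p] :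
    ((M ∩ P').filter p).card
      = (ex.filter p).card
        + ((∑ i : Fin T.k, if p (T.P.a i.succ, T.P.h i.castSucc) then 1 else 0)
          + ((if p (T.ak, T.P.h (Fin.last T.k)) then 1 else 0)
            + (if p (T.ak1, T.hk) then 1 else 0))) := by
  have h : M ∩ P' = ex ∪ (T.P.bwdEdges ∪ {(T.ak, T.P.h (Fin.last T.k)), (T.ak1, T.hk)}) := by
    rw [hP', Finset.inter_union_distrib_left, Finset.inter_eq_right.mpr hsub, T.inter_edges]
  have hd1 : Disjoint ex (T.P.bwdEdges ∪ {(T.ak, T.P.h (Fin.last T.k)), (T.ak1, T.hk)}) := by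
    rw [← T.inter_edges]
    exact hdisj.mono_right (Finset.inter_subset_right)
  have hd2 : Disjoint T.P.bwdEdges
      ({(T.ak, T.P.h (Fin.last T.k)), (T.ak1, T.hk)} : Finset (A × H)) := by
    rw [Finset.disjoint_right]
    intro x hx
    rcases Finset.mem_insert.mp hx with rfl | hx
    · exact T.ne1
    · rw [Finset.mem_singleton] at hx; subst hx; exact T.ne3.1
  have hpairne : (T.ak, T.P.h (Fin.last T.k)) ≠ (T.ak1, T.hk) := Ne.symm T.ne3.2
  have hpair : ((({(T.ak, T.P.h (Fin.last T.k)), (T.ak1, T.hk)}) : Finset (A × H)).filter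
      p).card = (if p (T.ak, T.P.h (Fin.last T.k)) then 1 else 0)
        + (if p (T.ak1, T.hk) then 1 else 0) := by
    rw [Finset.card_filter, Finset.sum_pair hpairne]
  rw [h, filter_union, card_union_of_disjoint (Finset.disjoint_filter_filter hd1),
    filter_union, card_union_of_disjoint (Finset.disjoint_filter_filter hd2),
    EvenPath.card_filter_bwd, hpair]

end Type1

theorem type1_aux {A H : Type*} [Fintype A] [Fintype H] [DecidableEq A] [DecidableEq H]
    {E : Finset (A × H)} {bA : A → ℕ} {bH : H → ℕ} {rk : A × H → ℕ}
    {M : Finset (A × H)} (hM : IsBM E bA bH M)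
    (T : Type1 E M bA rk) (ex P' : Finset (A × H))
    (hsub : ex ⊆ M) (hdisj : Disjoint ex T.edges) (hP'eq : P' = ex ∪ T.edges)
    (hcase : (adeg M (T.P.a 0) ≠ bA (T.P.a 0) ∧ ex = ∅) ∨
      (∃ e, ex = {e} ∧ e.1 = T.P.a 0 ∧ rk (T.P.a 0, T.P.h 0) < rk e)) :
    IsBM E bA bH (symmDiff M P') ∧ MorePop rk (symmDiff M P') M := by
  obtain ⟨hME, hMA, hMH⟩ := hM
  have hne_a0ak : T.P.a 0 ≠ T.ak := by
    rcases T.dcase with ⟨h, _, _⟩ | ⟨h, _, _⟩ <;> exact h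
  have hne_ak1ak : T.ak1 ≠ T.ak := by
    rcases T.dcase with ⟨_, _, h⟩ | ⟨h1, h2, _⟩
    · exact fun hc => h (hc.symm)
    · exact fun hc => h1 (h2.trans hc)
  have hrd := T.rdrop
  have hx3rk : ∀ r ≤ rk (T.P.a 0, T.P.h 0), ¬ (T.ak1 = T.P.a 0 ∧ rk (T.ak1, T.hk) = r) := by
    intro r hrle
    rcases T.dcase with ⟨_, h, _⟩ | ⟨_, heq, hlt⟩
    · rintro ⟨hc, -⟩; exact h hc.symm
    · rintro ⟨hc, hrk2⟩
      rw [← heq] at hrk2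
      omega
  -- the three basic relations
  have hR : ∀ a r, cnt rk (symmDiff M P') a r
        + ((ex.filter (fun z => z.1 = a ∧ rk z = r)).card
          + ((∑ i : Fin T.k,
              if T.P.a i.succ = a ∧ rk (T.P.a i.succ, T.P.h i.castSucc) = r then 1 else 0)
            + ((if T.ak = a ∧ rk (T.ak, T.P.h (Fin.last T.k)) = r then 1 else 0)
              + (if T.ak1 = a ∧ rk (T.ak1, T.hk) = r then 1 else 0))))
      = cnt rk M a r
        + (((if T.P.a 0 = a ∧ rk (T.P.a 0, T.P.h 0) = r then 1 else 0)
            + ∑ i : Fin T.k,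
              if T.P.a i.succ = a ∧ rk (T.P.a i.succ, T.P.h i.castSucc) = r then 1 else 0)
          + (if T.ak = a ∧ rk (T.ak, T.hk) = r then 1 else 0)) := by
    intro a r
    have h := symmDiff_filter_card M P' (fun z => z.1 = a ∧ rk z = r)
    rw [T.count_X hsub hdisj hP'eq, T.count_Y hsub hP'eq] at h
    dsimp only at h
    rw [Fin.sum_univ_succ] at h
    have hss : (∑ i : Fin T.k,
          if T.P.a i.succ = a ∧ rk (T.P.a i.succ, T.P.h i.succ) = r then 1 else 0)
        = ∑ i : Fin T.k,
          if T.P.a i.succ = a ∧ rk (T.P.a i.succ, T.P.h i.castSucc) = r then 1 else 0 := by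
      refine Finset.sum_congr rfl fun i _ => ?_
      rw [T.P.rank_eq i]
    rw [hss] at h
    simp only [cnt]
    omega
  have hRA : ∀ a, adeg (symmDiff M P') a
        + ((ex.filter (fun z => z.1 = a)).card
          + ((∑ i : Fin T.k, if T.P.a i.succ = a then 1 else 0)
            + ((if T.ak = a then 1 else 0) + (if T.ak1 = a then 1 else 0))))
      = adeg M a
        + (((if T.P.a 0 = a then 1 else 0)
            + ∑ i : Fin T.k, if T.P.a i.succ = a then 1 else 0)
          + (if T.ak = a then 1 else 0)) := by
    intro a
    have h := symmDiff_filter_card M P' (fun z => z.1 = a)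
    rw [T.count_X hsub hdisj hP'eq, T.count_Y hsub hP'eq] at h
    dsimp only at h
    rw [Fin.sum_univ_succ] at h
    simp only [adeg]
    omega
  have hRH : ∀ hh : H, hdeg (symmDiff M P') hh
        + ((ex.filter (fun z => z.2 = hh)).card
          + ((∑ i : Fin T.k, if T.P.h i.castSucc = hh then 1 else 0)
            + ((if T.P.h (Fin.last T.k) = hh then 1 else 0) + (if T.hk = hh then 1 else 0))))
      = hdeg M hh
        + (((∑ i : Fin T.k, if T.P.h i.castSucc = hh then 1 else 0)
            + (if T.P.h (Fin.last T.k) = hh then 1 else 0))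
          + (if T.hk = hh then 1 else 0)) := by
    intro hh
    have h := symmDiff_filter_card M P' (fun z => z.2 = hh)
    rw [T.count_X hsub hdisj hP'eq, T.count_Y hsub hP'eq] at h
    dsimp only at h
    rw [Fin.sum_univ_castSucc] at h
    simp only [hdeg]
    omega
  -- facts about the extra edge set
  have hfacts : (∀ a r, (a ≠ T.P.a 0 ∨ r ≤ rk (T.P.a 0, T.P.h 0)) →
        (ex.filter (fun z => z.1 = a ∧ rk z = r)).card = 0)
      ∧ (∀ a, a ≠ T.P.a 0 → (ex.filter (fun z => z.1 = a)).card = 0)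
      ∧ adeg (symmDiff M P') (T.P.a 0) ≤ bA (T.P.a 0) := by
    rcases hcase with ⟨hunsat, hceq⟩ | ⟨e, hceq, he1, herk⟩
    · refine ⟨fun a r _ => by simp [hceq], fun a _ => by simp [hceq], ?_⟩
      have hlt : adeg M (T.P.a 0) < bA (T.P.a 0) := lt_of_le_of_ne (hMA _) hunsat
      have hr := hRA (T.P.a 0)
      rw [hceq] at hr
      simp only [Finset.filter_empty, Finset.card_empty, if_true] at hr
      omega
    · refine ⟨fun a r hor => ?_, fun a ha => ?_, ?_⟩
      · rw [hceq, Finset.filter_singleton, if_neg, Finset.card_empty]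
        rintro ⟨h1, h2⟩
        rcases hor with ha | hrle
        · exact ha (h1.symm.trans he1)
        · omega
      · rw [hceq, Finset.filter_singleton, if_neg, Finset.card_empty]
        exact fun h1 => ha (h1.symm.trans he1)
      · have hr := hRA (T.P.a 0)
        have h00 : (if T.P.a 0 = T.P.a 0 then (1:ℕ) else 0) = 1 := if_pos rfl
        rw [hceq, Finset.filter_singleton, if_pos he1, Finset.card_singleton, h00] at hr
        have := hMA (T.P.a 0)
        omega
  -- the two agents who prefer the new matching
  have hprefA0 : Prefers rk (symmDiff M P') M (T.P.a 0) := by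
    refine ⟨rk (T.P.a 0, T.P.h 0), fun i hi => ?_, ?_⟩
    · have hr := hR (T.P.a 0) i
      rw [hfacts.1 _ _ (Or.inr hi.le),
        if_neg (show ¬(T.P.a 0 = T.P.a 0 ∧ rk (T.P.a 0, T.P.h 0) = i) from
          fun hc => by omega),
        if_neg (show ¬(T.ak = T.P.a 0 ∧ rk (T.ak, T.P.h (Fin.last T.k)) = i) from
          fun hc => hne_a0ak hc.1.symm),
        if_neg (hx3rk i hi.le),
        if_neg (show ¬(T.ak = T.P.a 0 ∧ rk (T.ak, T.hk) = i) from
          fun hc => hne_a0ak hc.1.symm)] at hr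
      omega
    · have hr := hR (T.P.a 0) (rk (T.P.a 0, T.P.h 0))
      rw [hfacts.1 _ _ (Or.inr le_rfl),
        if_pos (show T.P.a 0 = T.P.a 0 ∧ rk (T.P.a 0, T.P.h 0) = rk (T.P.a 0, T.P.h 0) from
          ⟨rfl, rfl⟩),
        if_neg (show ¬(T.ak = T.P.a 0 ∧
            rk (T.ak, T.P.h (Fin.last T.k)) = rk (T.P.a 0, T.P.h 0)) from
          fun hc => hne_a0ak hc.1.symm),
        if_neg (hx3rk _ le_rfl),
        if_neg (show ¬(T.ak = T.P.a 0 ∧ rk (T.ak, T.hk) = rk (T.P.a 0, T.P.h 0)) from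
          fun hc => hne_a0ak hc.1.symm)] at hr
      omega
  have hprefAk : Prefers rk (symmDiff M P') M T.ak := by
    refine ⟨rk (T.ak, T.hk), fun i hi => ?_, ?_⟩
    · have hr := hR T.ak i
      rw [hfacts.1 _ _ (Or.inl (Ne.symm hne_a0ak)),
        if_neg (show ¬(T.P.a 0 = T.ak ∧ rk (T.P.a 0, T.P.h 0) = i) from
          fun hc => hne_a0ak hc.1),
        if_neg (show ¬(T.ak = T.ak ∧ rk (T.ak, T.P.h (Fin.last T.k)) = i) from
          fun hc => by omega),
        if_neg (show ¬(T.ak1 = T.ak ∧ rk (T.ak1, T.hk) = i) from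
          fun hc => hne_ak1ak hc.1),
        if_neg (show ¬(T.ak = T.ak ∧ rk (T.ak, T.hk) = i) from fun hc => by omega)] at hr
      omega
    · have hr := hR T.ak (rk (T.ak, T.hk))
      rw [hfacts.1 _ _ (Or.inl (Ne.symm hne_a0ak)),
        if_neg (show ¬(T.P.a 0 = T.ak ∧ rk (T.P.a 0, T.P.h 0) = rk (T.ak, T.hk)) from
          fun hc => hne_a0ak hc.1),
        if_neg (show ¬(T.ak = T.ak ∧ rk (T.ak, T.P.h (Fin.last T.k)) = rk (T.ak, T.hk)) from
          fun hc => by omega),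
        if_neg (show ¬(T.ak1 = T.ak ∧ rk (T.ak1, T.hk) = rk (T.ak, T.hk)) from
          fun hc => hne_ak1ak hc.1),
        if_pos (show T.ak = T.ak ∧ rk (T.ak, T.hk) = rk (T.ak, T.hk) from ⟨rfl, rfl⟩)] at hr
      omega
  have hother : ∀ a, a ≠ T.P.a 0 → a ≠ T.ak → a ≠ T.ak1 → ∀ r,
      cnt rk (symmDiff M P') a r = cnt rk M a r := by
    intro a h0 hk hk1 r
    have hr := hR a r
    rw [hfacts.1 _ _ (Or.inl h0),
      if_neg (show ¬(T.P.a 0 = a ∧ rk (T.P.a 0, T.P.h 0) = r) from fun hc => h0 hc.1.symm),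
      if_neg (show ¬(T.ak = a ∧ rk (T.ak, T.P.h (Fin.last T.k)) = r) from
        fun hc => hk hc.1.symm),
      if_neg (show ¬(T.ak1 = a ∧ rk (T.ak1, T.hk) = r) from fun hc => hk1 hc.1.symm),
      if_neg (show ¬(T.ak = a ∧ rk (T.ak, T.hk) = r) from fun hc => hk hc.1.symm)] at hr
    omega
  have hBM : IsBM E bA bH (symmDiff M P') := by
    refine ⟨?_, ?_, ?_⟩
    · have hP'E : P' ⊆ E := by
        rw [hP'eq]
        exact Finset.union_subset (hsub.trans hME) (T.edges_subset hME)
      intro x hx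
      rw [symmDiff_def] at hx
      rcases Finset.mem_union.mp hx with hx | hx
      · exact hME (Finset.mem_sdiff.mp hx).1
      · exact hP'E (Finset.mem_sdiff.mp hx).1
    · intro a
      by_cases ha : a = T.P.a 0
      · subst ha; exact hfacts.2.2
      · have hr := hRA a
        rw [hfacts.2.1 a ha, if_neg (show ¬ T.P.a 0 = a from fun hc => ha hc.symm)] at hr
        have := hMA a
        omega
    · intro hh
      have hr := hRH hh
      have := hMH hh
      omega
  refine ⟨hBM, ?_⟩
  have hFin1 : Fintype {a : A // Prefers rk M (symmDiff M P') a} := Fintype.ofFinite _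
  have hFin2 : Fintype {a : A // Prefers rk (symmDiff M P') M a} := Fintype.ofFinite _
  simp only [MorePop, Nat.card_eq_fintype_card]
  have hkey : ∀ x : {a : A // Prefers rk M (symmDiff M P') a}, x.1 = T.ak1 := by
    rintro ⟨a, ha⟩
    by_contra hne9
    by_cases h0 : a = T.P.a 0
    · exact prefers_asymm rk M (symmDiff M P') a (h0 ▸ hprefA0) ha
    · by_cases hk : a = T.ak
      · exact prefers_asymm rk M (symmDiff M P') a (hk ▸ hprefAk) ha
      · obtain ⟨j, hpre, hlt⟩ := ha
        rw [hother a h0 hk hne9 j] at hlt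
        omega
  have h1 : Fintype.card {a : A // Prefers rk M (symmDiff M P') a} ≤ 1 :=
    Fintype.card_le_one_iff.mpr fun x y => Subtype.ext ((hkey x).trans (hkey y).symm)
  have h2 : 1 < Fintype.card {a : A // Prefers rk (symmDiff M P') M a} :=
    Fintype.one_lt_card_iff.mpr
      ⟨⟨_, hprefA0⟩, ⟨_, hprefAk⟩, fun hc => hne_a0ak (congrArg Subtype.val hc)⟩
  omega

end Aux

/-- If `P` is a path of type (1) with respect to a b-matching `M`, and
`P'` is `P`, respectively `P ∪ {e}` for an `M`-edge `e` incident with the initial agent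
`a_1` of rank worse than `r (a_1, h_1)` (with `e ∉ P`), according as `a_1` is unsaturated
or saturated, then `M ⊕ P'` is a b-matching that is more popular than `M`; in particular
`M` is not popular. -/
theorem type1_not_popular
    {A H : Type*} [Fintype A] [Fintype H] [DecidableEq A] [DecidableEq H]
    (E : Finset (A × H)) (bA : A → ℕ) (bH : H → ℕ) (rk : A × H → ℕ)
    (hrk : ∀ e ∈ E, 0 < rk e)
    (M : Finset (A × H)) (hM : IsBM E bA bH M)
    (T : Type1 E M bA rk) (P' : Finset (A × H))
    (hP' : (adeg M (T.P.a 0) ≠ bA (T.P.a 0) ∧ P' = T.edges) ∨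
      (adeg M (T.P.a 0) = bA (T.P.a 0) ∧
        ∃ e ∈ M, e.1 = T.P.a 0 ∧ rk (T.P.a 0, T.P.h 0) < rk e ∧ e ∉ T.edges ∧
          P' = insert e T.edges)) :
    IsBM E bA bH (symmDiff M P') ∧ MorePop rk (symmDiff M P') M ∧
      ¬ Popular E bA bH rk M := by
  rcases hP' with ⟨hun, hPe⟩ | ⟨hsat, e, heM, he1, herk, heT, hPe⟩
  · have haux := type1_aux hM T ∅ P' (Finset.empty_subset M)
      (Finset.disjoint_left.mpr (by simp)) (by rw [hPe, Finset.empty_union])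
      (Or.inl ⟨hun, rfl⟩)
    exact ⟨haux.1, haux.2, fun hpop => hpop.2 _ haux.1 haux.2⟩
  · have haux := type1_aux hM T {e} P' (Finset.singleton_subset_iff.mpr heM)
      (Finset.disjoint_singleton_left.mpr heT) (by rw [hPe, Finset.insert_eq])
      (Or.inr ⟨e, rfl, he1, herk⟩)
    exact ⟨haux.1, haux.2, fun hpop => hpop.2 _ haux.1 haux.2⟩
end

section
/- Let M be a b-matching of an instance (G,b,r) and let P be a path of type (2) with respect to M, with endpoints a_1 and a'_1 and corresponding first houses h_1 and h'_1. Let P' be P together with an edge e ∈ M incident with a_1 of rank greater than r(a_1,h_1) if a_1 is saturated, and together with an edge e' ∈ M incident with a'_1 of rank greater than r(a'_1,h'_1) if a'_1 is saturated. Then M ⊕ P' is a b-matching that is more popular than M; in particular M is not popular. -/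
open Finset

/-! Let `N = M ⊕ P'`. Along each even path every agent after the first trades an `M`-edge for a
non-`M`-edge of the same rank, and every house trades one `M`-edge for another, so signatures
change at three agents only. The endpoints `a_1`, `a'_1` gain an edge of rank `r(a_1, h_1)`
and lose at most one edge of worse rank, so both prefer `N`; only the middle agent, which loses
its two closing `M`-edges, can prefer `M`. Capacities are respected because a saturated
endpoint gives up the extra edge `e`. -/

section Popularity

variable {A H : Type*} [DecidableEq A] {rk : A × H → ℕ}
  {M N : Finset (A × H)} {a : A}

lemma prefers_and_not_prefers_of_cnt {j : ℕ}
    (h : ∀ i ≤ j, cnt rk N a i = cnt rk M a i + if i = j then 1 else 0) :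
    Prefers rk N M a ∧ ¬ Prefers rk M N a := by
  refine ⟨⟨j, fun i hi => by simpa [hi.ne] using h i hi.le, by simp [h j le_rfl]⟩, ?_⟩
  rintro ⟨j', hj'_eq, hj'_lt⟩
  rcases le_or_gt j' j with hle | hlt
  · have := h j' hle
    omega
  · have hj := h j le_rfl
    rw [if_pos rfl] at hj
    have := hj'_eq j hlt
    omega

lemma not_prefers_of_cnt_eq (h : ∀ i, cnt rk N a i = cnt rk M a i) : ¬ Prefers rk M N a := by
  rintro ⟨j, -, hj⟩
  exact hj.ne (h j)

lemma morePop_of_prefers [Fintype A] {a₁ a₂ c : A} (h₁ : Prefers rk N M a₁)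
    (h₂ : Prefers rk N M a₂) (hne : a₁ ≠ a₂) (hc : ∀ a, Prefers rk M N a → a = c) :
    MorePop rk N M := by
  have hle : Nat.card {a : A // Prefers rk M N a} ≤ 1 :=
    Finite.card_le_one_iff_subsingleton.2
      ⟨fun x y => Subtype.ext ((hc x x.2).trans (hc y y.2).symm)⟩
  have hlt : 1 < Nat.card {a : A // Prefers rk N M a} :=
    Finite.one_lt_card_iff_nontrivial.2
      ⟨⟨a₁, h₁⟩, ⟨a₂, h₂⟩, fun h => hne (congrArg Subtype.val h)⟩
  exact hle.trans_lt hlt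

end Popularity

lemma Finset.card_filter_symmDiff_union_add {α : Type*} [DecidableEq α] {M F R : Finset α}
    (hRM : R ⊆ M) (hFM : Disjoint F M) (p : α → Prop) [DecidablePred p] :
    #{e ∈ symmDiff M (F ∪ R) | p e} + #{e ∈ R | p e} = #{e ∈ M | p e} + #{e ∈ F | p e} := by
  have hN : symmDiff M (F ∪ R) = M \ R ∪ F := by
    ext e
    have := @hRM e
    have : e ∈ F → e ∉ M := fun h => disjoint_left.mp hFM h
    simp only [mem_symmDiff, mem_union, mem_sdiff]
    tauto
  have hM : #{e ∈ M \ R | p e} + #{e ∈ R | p e} = #{e ∈ M | p e} := by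
    rw [← card_union_of_disjoint (disjoint_filter_filter sdiff_disjoint), ← filter_union,
      sdiff_union_of_subset hRM]
  rw [hN, filter_union, card_union_of_disjoint (disjoint_filter_filter
    (hFM.symm.mono_left sdiff_subset)), ← hM]
  ring

namespace EvenPath

variable {A H : Type*} [DecidableEq A] [DecidableEq H]
variable {E M : Finset (A × H)} {rk : A × H → ℕ} {k : ℕ}

lemma card_filter_fwdEdges (P : EvenPath E M rk k) (p : A × H → Prop) [DecidablePred p] :
    #{e ∈ P.fwdEdges | p e} = ∑ i : Fin (k + 1), if p (P.a i, P.h i) then 1 else 0 := by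
  rw [fwdEdges, filter_image, card_image_of_injective _ fun i j hij => P.fwd_inj i j hij,
    card_filter]

lemma card_filter_bwdEdges (P : EvenPath E M rk k) (p : A × H → Prop) [DecidablePred p] :
    #{e ∈ P.bwdEdges | p e} = ∑ i : Fin k, if p (P.a i.succ, P.h i.castSucc) then 1 else 0 := by
  rw [bwdEdges, filter_image, card_image_of_injective _ fun i j hij => P.bwd_inj i j hij,
    card_filter]

lemma card_filter_fwdEdges_agent_rank (P : EvenPath E M rk k) (q : A × ℕ → Prop)
    [DecidablePred q] :
    #{e ∈ P.fwdEdges | q (e.1, rk e)} =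
      #{e ∈ P.bwdEdges | q (e.1, rk e)} + if q (P.a 0, rk (P.a 0, P.h 0)) then 1 else 0 := by
  rw [card_filter_fwdEdges P (fun e => q (e.1, rk e)),
    card_filter_bwdEdges P (fun e => q (e.1, rk e)), Fin.sum_univ_succ, add_comm]
  simp only [P.rank_eq]

lemma card_filter_fwdEdges_house (P : EvenPath E M rk k) (q : H → Prop) [DecidablePred q] :
    #{e ∈ P.fwdEdges | q e.2} =
      #{e ∈ P.bwdEdges | q e.2} + if q (P.h (Fin.last k)) then 1 else 0 := by
  rw [card_filter_fwdEdges P (fun e => q e.2), card_filter_bwdEdges P (fun e => q e.2),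
    Fin.sum_univ_castSucc]

lemma fwdEdges_subset (P : EvenPath E M rk k) : P.fwdEdges ⊆ E := by
  simp only [fwdEdges, image_subset_iff, mem_univ, forall_const]
  exact P.fwd_mem

lemma disjoint_fwdEdges (P : EvenPath E M rk k) : Disjoint P.fwdEdges M := by
  simp only [fwdEdges, disjoint_left, mem_image, mem_univ, true_and, forall_exists_index,
    forall_apply_eq_imp_iff]
  exact P.fwd_not

lemma bwdEdges_subset (P : EvenPath E M rk k) : P.bwdEdges ⊆ M := by
  simp only [bwdEdges, image_subset_iff, mem_univ, forall_const]
  exact P.bwd_mem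

end EvenPath

section ReleasesCapacity

variable {A H : Type*} [DecidableEq A] {M : Finset (A × H)} {bA : A → ℕ} {rk : A × H → ℕ}

/-- `X` is what the augmenting path `P'` adds at its endpoint `a` with first house `h`: if `a`
is saturated, one worse `M`-edge of `a` whose removal makes room for `(a, h)`. -/
def ReleasesCapacity (bA : A → ℕ) (rk : A × H → ℕ) (M : Finset (A × H)) (a : A) (h : H)
    (X : Finset (A × H)) : Prop :=
  X ⊆ M ∧ (∀ f ∈ X, f.1 = a ∧ rk (a, h) < rk f) ∧ adeg M a < bA a + #X

lemma releasesCapacity_of {a : A} {h : H} {S X : Finset (A × H)} (hMa : adeg M a ≤ bA a)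
    (hX : (adeg M a ≠ bA a ∧ X = ∅) ∨
      (adeg M a = bA a ∧ ∃ e ∈ M, e.1 = a ∧ rk (a, h) < rk e ∧ e ∉ S ∧ X = {e})) :
    ReleasesCapacity bA rk M a h X ∧ Disjoint X S := by
  rcases hX with ⟨hunsat, rfl⟩ | ⟨hsat, e, heM, rfl, hrk, heS, rfl⟩
  · exact ⟨⟨empty_subset _, by simp, by simp only [card_empty]; omega⟩, disjoint_empty_left _⟩
  · refine ⟨⟨singleton_subset_iff.2 heM, by simpa using hrk, by simp [hsat]⟩, ?_⟩
    exact disjoint_singleton_left.2 heS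

end ReleasesCapacity

namespace Type2

variable {A H : Type*} [DecidableEq A] [DecidableEq H]
variable {E M : Finset (A × H)} {bA : A → ℕ} {bH : H → ℕ} {rk : A × H → ℕ}

def swap (T : Type2 E M bA rk) : Type2 E M bA rk where
  k := T.k'
  k' := T.k
  P := T.P'
  P' := T.P
  am := T.am
  cl := T.cl'
  cl' := T.cl
  clne := T.clne'
  clne' := T.clne
  start := T.start'
  start' := T.start
  dist := ⟨T.dist.2.1, T.dist.1, T.dist.2.2.symm⟩
  disj := T.disj.symm

lemma swap_edges (T : Type2 E M bA rk) : T.swap.edges = T.edges :=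
  union_comm _ _

def fwdEdges (T : Type2 E M bA rk) : Finset (A × H) :=
  T.P.fwdEdges ∪ T.P'.fwdEdges

def bwdEdges (T : Type2 E M bA rk) : Finset (A × H) :=
  insert (T.am, T.P.h (Fin.last T.k)) T.P.bwdEdges ∪
    insert (T.am, T.P'.h (Fin.last T.k')) T.P'.bwdEdges

lemma edges_eq_fwdEdges_union_bwdEdges (T : Type2 E M bA rk) :
    T.edges = T.fwdEdges ∪ T.bwdEdges := by
  ext e
  simp only [edges, fwdEdges, bwdEdges, EvenPath.edges, mem_union, mem_insert, mem_singleton]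
  tauto

lemma disjoint_fwdEdges (T : Type2 E M bA rk) : Disjoint T.fwdEdges M :=
  disjoint_union_left.2 ⟨T.P.disjoint_fwdEdges, T.P'.disjoint_fwdEdges⟩

lemma bwdEdges_subset (T : Type2 E M bA rk) : T.bwdEdges ⊆ M :=
  union_subset (insert_subset T.cl T.P.bwdEdges_subset)
    (insert_subset T.cl' T.P'.bwdEdges_subset)

lemma edges_subset (T : Type2 E M bA rk) (hME : M ⊆ E) : T.edges ⊆ E := by
  rw [edges_eq_fwdEdges_union_bwdEdges]
  exact union_subset (union_subset T.P.fwdEdges_subset T.P'.fwdEdges_subset)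
    (T.bwdEdges_subset.trans hME)

lemma card_filter_fwdEdges (T : Type2 E M bA rk) (p : A × H → Prop) [DecidablePred p] :
    #{e ∈ T.fwdEdges | p e} = #{e ∈ T.P.fwdEdges | p e} + #{e ∈ T.P'.fwdEdges | p e} := by
  have hdisj : Disjoint T.P.fwdEdges T.P'.fwdEdges :=
    T.disj.mono (subset_union_left.trans subset_union_left)
      (subset_union_left.trans subset_union_left)
  rw [fwdEdges, filter_union, card_union_of_disjoint (disjoint_filter_filter hdisj)]

lemma card_filter_bwdEdges (T : Type2 E M bA rk) (p : A × H → Prop) [DecidablePred p] :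
    #{e ∈ T.bwdEdges | p e} =
      (#{e ∈ T.P.bwdEdges | p e} + if p (T.am, T.P.h (Fin.last T.k)) then 1 else 0) +
        (#{e ∈ T.P'.bwdEdges | p e} + if p (T.am, T.P'.h (Fin.last T.k')) then 1 else 0) := by
  have hdisj : Disjoint (insert (T.am, T.P.h (Fin.last T.k)) T.P.bwdEdges)
      (insert (T.am, T.P'.h (Fin.last T.k')) T.P'.bwdEdges) := by
    refine T.disj.mono ?_ ?_ <;>
    · rw [insert_eq, union_comm]
      exact union_subset_union subset_union_right Subset.rfl
  rw [bwdEdges, filter_union, card_union_of_disjoint (disjoint_filter_filter hdisj),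
    card_filter, card_filter, sum_insert T.clne, sum_insert T.clne', ← card_filter,
    ← card_filter]
  ring

variable {Y : Finset (A × H)}

lemma card_filter_augment (T : Type2 E M bA rk) (hYM : Y ⊆ M) (hYT : Disjoint Y T.edges)
    (p : A × H → Prop) [DecidablePred p] :
    #{e ∈ symmDiff M (T.edges ∪ Y) | p e} + #{e ∈ Y | p e} + #{e ∈ T.bwdEdges | p e} =
      #{e ∈ M | p e} + #{e ∈ T.fwdEdges | p e} := by
  have hdisj : Disjoint T.bwdEdges Y := by
    rw [edges_eq_fwdEdges_union_bwdEdges] at hYT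
    exact (disjoint_union_right.1 hYT).2.symm
  have h := card_filter_symmDiff_union_add (union_subset T.bwdEdges_subset hYM)
    T.disjoint_fwdEdges p
  rw [← union_assoc, ← edges_eq_fwdEdges_union_bwdEdges, filter_union,
    card_union_of_disjoint (disjoint_filter_filter hdisj)] at h
  omega

lemma card_filter_agent_rank_augment (T : Type2 E M bA rk) (hYM : Y ⊆ M)
    (hYT : Disjoint Y T.edges) (q : A × ℕ → Prop) [DecidablePred q] :
    #{e ∈ symmDiff M (T.edges ∪ Y) | q (e.1, rk e)} + #{e ∈ Y | q (e.1, rk e)} +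
        ((if q (T.am, rk (T.am, T.P.h (Fin.last T.k))) then 1 else 0) +
          if q (T.am, rk (T.am, T.P'.h (Fin.last T.k'))) then 1 else 0) =
      #{e ∈ M | q (e.1, rk e)} +
        ((if q (T.P.a 0, rk (T.P.a 0, T.P.h 0)) then 1 else 0) +
          if q (T.P'.a 0, rk (T.P'.a 0, T.P'.h 0)) then 1 else 0) := by
  have h := T.card_filter_augment hYM hYT fun e => q (e.1, rk e)
  rw [card_filter_bwdEdges, card_filter_fwdEdges, T.P.card_filter_fwdEdges_agent_rank,
    T.P'.card_filter_fwdEdges_agent_rank] at h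
  dsimp only at h
  omega

lemma card_filter_house_augment (T : Type2 E M bA rk) (hYM : Y ⊆ M)
    (hYT : Disjoint Y T.edges) (q : H → Prop) [DecidablePred q] :
    #{e ∈ symmDiff M (T.edges ∪ Y) | q e.2} + #{e ∈ Y | q e.2} = #{e ∈ M | q e.2} := by
  have h := T.card_filter_augment hYM hYT fun e => q e.2
  rw [card_filter_bwdEdges, card_filter_fwdEdges, T.P.card_filter_fwdEdges_house,
    T.P'.card_filter_fwdEdges_house] at h
  dsimp only at h
  omega

variable {X X' : Finset (A × H)}

lemma augment_swap (T : Type2 E M bA rk) :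
    symmDiff M (T.swap.edges ∪ X' ∪ X) = symmDiff M (T.edges ∪ X ∪ X') := by
  rw [swap_edges, union_right_comm]

lemma cnt_augment_start (T : Type2 E M bA rk)
    (hX : ReleasesCapacity bA rk M (T.P.a 0) (T.P.h 0) X)
    (hX' : ReleasesCapacity bA rk M (T.P'.a 0) (T.P'.h 0) X')
    (hXT : Disjoint X T.edges) (hX'T : Disjoint X' T.edges) :
    ∀ i ≤ rk (T.P.a 0, T.P.h 0), cnt rk (symmDiff M (T.edges ∪ X ∪ X')) (T.P.a 0) i =
      cnt rk M (T.P.a 0) i + if i = rk (T.P.a 0, T.P.h 0) then 1 else 0 := by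
  intro i hi
  have h := T.card_filter_agent_rank_augment (union_subset hX.1 hX'.1)
    (disjoint_union_left.2 ⟨hXT, hX'T⟩) fun x => x.1 = T.P.a 0 ∧ x.2 = i
  have hY : {e ∈ X ∪ X' | e.1 = T.P.a 0 ∧ rk e = i} = ∅ := by
    refine filter_eq_empty_iff.2 fun f hf ⟨hfa, hfi⟩ => ?_
    rcases mem_union.1 hf with hf | hf
    · exact absurd (hX.2.1 f hf).2 (by omega)
    · exact T.dist.2.2 (hfa.symm.trans (hX'.2.1 f hf).1)
  simp only [hY, card_empty, T.dist.1.symm, T.dist.2.2.symm, false_and, if_false, true_and,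
    ← union_assoc] at h
  simp only [cnt, eq_comm (a := i)]
  omega

lemma cnt_augment_start' (T : Type2 E M bA rk)
    (hX : ReleasesCapacity bA rk M (T.P.a 0) (T.P.h 0) X)
    (hX' : ReleasesCapacity bA rk M (T.P'.a 0) (T.P'.h 0) X')
    (hXT : Disjoint X T.edges) (hX'T : Disjoint X' T.edges) :
    ∀ i ≤ rk (T.P'.a 0, T.P'.h 0), cnt rk (symmDiff M (T.edges ∪ X ∪ X')) (T.P'.a 0) i =
      cnt rk M (T.P'.a 0) i + if i = rk (T.P'.a 0, T.P'.h 0) then 1 else 0 := by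
  rw [← augment_swap]
  exact T.swap.cnt_augment_start hX' hX (T.swap_edges ▸ hX'T) (T.swap_edges ▸ hXT)

lemma cnt_augment_of_ne (T : Type2 E M bA rk)
    (hX : ReleasesCapacity bA rk M (T.P.a 0) (T.P.h 0) X)
    (hX' : ReleasesCapacity bA rk M (T.P'.a 0) (T.P'.h 0) X')
    (hXT : Disjoint X T.edges) (hX'T : Disjoint X' T.edges) {a : A} (ha : a ≠ T.P.a 0)
    (ha' : a ≠ T.P'.a 0) (ham : a ≠ T.am) (i : ℕ) :
    cnt rk (symmDiff M (T.edges ∪ X ∪ X')) a i = cnt rk M a i := by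
  have h := T.card_filter_agent_rank_augment (union_subset hX.1 hX'.1)
    (disjoint_union_left.2 ⟨hXT, hX'T⟩) fun x => x.1 = a ∧ x.2 = i
  have hY : {e ∈ X ∪ X' | e.1 = a ∧ rk e = i} = ∅ := by
    refine filter_eq_empty_iff.2 fun f hf ⟨hfa, _⟩ => ?_
    rcases mem_union.1 hf with hf | hf
    · exact ha (hfa.symm.trans (hX.2.1 f hf).1)
    · exact ha' (hfa.symm.trans (hX'.2.1 f hf).1)
  simp only [hY, card_empty, ham.symm, ha.symm, ha'.symm, false_and, if_false,
    ← union_assoc] at h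
  simpa [cnt] using h

lemma eq_am_of_prefers (T : Type2 E M bA rk)
    (hX : ReleasesCapacity bA rk M (T.P.a 0) (T.P.h 0) X)
    (hX' : ReleasesCapacity bA rk M (T.P'.a 0) (T.P'.h 0) X')
    (hXT : Disjoint X T.edges) (hX'T : Disjoint X' T.edges) (a : A)
    (ha : Prefers rk M (symmDiff M (T.edges ∪ X ∪ X')) a) : a = T.am := by
  by_contra ham
  have ha₁ : a ≠ T.P.a 0 := by
    rintro rfl
    exact (prefers_and_not_prefers_of_cnt (T.cnt_augment_start hX hX' hXT hX'T)).2 ha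
  have ha₂ : a ≠ T.P'.a 0 := by
    rintro rfl
    exact (prefers_and_not_prefers_of_cnt (T.cnt_augment_start' hX hX' hXT hX'T)).2 ha
  exact not_prefers_of_cnt_eq (T.cnt_augment_of_ne hX hX' hXT hX'T ha₁ ha₂ ham) ha

lemma adeg_augment_start_le (T : Type2 E M bA rk)
    (hX : ReleasesCapacity bA rk M (T.P.a 0) (T.P.h 0) X)
    (hX' : ReleasesCapacity bA rk M (T.P'.a 0) (T.P'.h 0) X')
    (hXT : Disjoint X T.edges) (hX'T : Disjoint X' T.edges) :
    adeg (symmDiff M (T.edges ∪ X ∪ X')) (T.P.a 0) ≤ bA (T.P.a 0) := by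
  have h := T.card_filter_agent_rank_augment (union_subset hX.1 hX'.1)
    (disjoint_union_left.2 ⟨hXT, hX'T⟩) fun x => x.1 = T.P.a 0
  have hXY : #X ≤ #{e ∈ X ∪ X' | e.1 = T.P.a 0} :=
    card_le_card fun f hf => mem_filter.2 ⟨mem_union_left _ hf, (hX.2.1 f hf).1⟩
  simp only [T.dist.1.symm, T.dist.2.2.symm, if_false, if_true, ← union_assoc] at h
  have hcap := hX.2.2
  simp only [adeg] at hcap ⊢
  omega

lemma adeg_augment_le_of_ne (T : Type2 E M bA rk) (hYM : X ∪ X' ⊆ M)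
    (hYT : Disjoint (X ∪ X') T.edges) {a : A} (ha : a ≠ T.P.a 0) (ha' : a ≠ T.P'.a 0) :
    adeg (symmDiff M (T.edges ∪ X ∪ X')) a ≤ adeg M a := by
  have h := T.card_filter_agent_rank_augment hYM hYT fun x => x.1 = a
  simp only [ha.symm, ha'.symm, if_false, ← union_assoc] at h
  simp only [adeg]
  omega

lemma isBM_augment (T : Type2 E M bA rk) (hM : IsBM E bA bH M)
    (hX : ReleasesCapacity bA rk M (T.P.a 0) (T.P.h 0) X)
    (hX' : ReleasesCapacity bA rk M (T.P'.a 0) (T.P'.h 0) X')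
    (hXT : Disjoint X T.edges) (hX'T : Disjoint X' T.edges) :
    IsBM E bA bH (symmDiff M (T.edges ∪ X ∪ X')) := by
  obtain ⟨hME, hMA, hMH⟩ := hM
  have hYM : X ∪ X' ⊆ M := union_subset hX.1 hX'.1
  have hYT : Disjoint (X ∪ X') T.edges := disjoint_union_left.2 ⟨hXT, hX'T⟩
  refine ⟨symmDiff_subset_union.trans (union_subset hME
    (union_subset (union_subset (T.edges_subset hME) (hX.1.trans hME)) (hX'.1.trans hME))),
    fun a => ?_, fun h => ?_⟩
  · by_cases ha : a = T.P.a 0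
    · exact ha ▸ T.adeg_augment_start_le hX hX' hXT hX'T
    by_cases ha' : a = T.P'.a 0
    · rw [ha', ← augment_swap]
      exact T.swap.adeg_augment_start_le hX' hX (T.swap_edges ▸ hX'T) (T.swap_edges ▸ hXT)
    exact (T.adeg_augment_le_of_ne hYM hYT ha ha').trans (hMA a)
  · have := T.card_filter_house_augment hYM hYT fun x => x = h
    rw [← union_assoc] at this
    exact le_trans (by simp only [hdeg]; omega) (hMH h)

end Type2

theorem type2_not_popular_general
    {A H : Type*} [Fintype A] [DecidableEq A] [DecidableEq H]
    (E : Finset (A × H)) (bA : A → ℕ) (bH : H → ℕ) (rk : A × H → ℕ)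
    (M : Finset (A × H)) (hM : IsBM E bA bH M)
    (T : Type2 E M bA rk) (X X' : Finset (A × H))
    (hX : (adeg M (T.P.a 0) ≠ bA (T.P.a 0) ∧ X = ∅) ∨
      (adeg M (T.P.a 0) = bA (T.P.a 0) ∧
        ∃ e ∈ M, e.1 = T.P.a 0 ∧ rk (T.P.a 0, T.P.h 0) < rk e ∧ e ∉ T.edges ∧ X = {e}))
    (hX' : (adeg M (T.P'.a 0) ≠ bA (T.P'.a 0) ∧ X' = ∅) ∨
      (adeg M (T.P'.a 0) = bA (T.P'.a 0) ∧
        ∃ e' ∈ M, e'.1 = T.P'.a 0 ∧ rk (T.P'.a 0, T.P'.h 0) < rk e' ∧ e' ∉ T.edges ∧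
          X' = {e'})) :
    IsBM E bA bH (symmDiff M (T.edges ∪ X ∪ X')) ∧
      MorePop rk (symmDiff M (T.edges ∪ X ∪ X')) M ∧ ¬ Popular E bA bH rk M := by
  obtain ⟨hXr, hXT⟩ := releasesCapacity_of (hM.2.1 _) hX
  obtain ⟨hX'r, hX'T⟩ := releasesCapacity_of (hM.2.1 _) hX'
  have hN := T.isBM_augment hM hXr hX'r hXT hX'T
  have hpop : MorePop rk (symmDiff M (T.edges ∪ X ∪ X')) M :=
    morePop_of_prefers
      (prefers_and_not_prefers_of_cnt (T.cnt_augment_start hXr hX'r hXT hX'T)).1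
      (prefers_and_not_prefers_of_cnt (T.cnt_augment_start' hXr hX'r hXT hX'T)).1
      T.dist.2.2 (T.eq_am_of_prefers hXr hX'r hXT hX'T)
  exact ⟨hN, hpop, fun hMpop => hMpop.2 _ hN hpop⟩

/-- If `P` is a path of type (2) with respect to a b-matching `M`, and
`P'` is `P` together with an `M`-edge `e` incident with the endpoint `a_1` of rank worse
than `r (a_1, h_1)` if `a_1` is saturated, and together with an `M`-edge `e'` incident
with the other endpoint `a'_1` of rank worse than `r (a'_1, h'_1)` if `a'_1` is
saturated, then `M ⊕ P'` is a b-matching that is more popular than `M`; in particular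
`M` is not popular. -/
theorem type2_not_popular
    {A H : Type*} [Fintype A] [Fintype H] [DecidableEq A] [DecidableEq H]
    (E : Finset (A × H)) (bA : A → ℕ) (bH : H → ℕ) (rk : A × H → ℕ)
    (hrk : ∀ e ∈ E, 0 < rk e)
    (M : Finset (A × H)) (hM : IsBM E bA bH M)
    (T : Type2 E M bA rk) (X X' : Finset (A × H))
    (hX : (adeg M (T.P.a 0) ≠ bA (T.P.a 0) ∧ X = ∅) ∨
      (adeg M (T.P.a 0) = bA (T.P.a 0) ∧
        ∃ e ∈ M, e.1 = T.P.a 0 ∧ rk (T.P.a 0, T.P.h 0) < rk e ∧ e ∉ T.edges ∧ X = {e}))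
    (hX' : (adeg M (T.P'.a 0) ≠ bA (T.P'.a 0) ∧ X' = ∅) ∨
      (adeg M (T.P'.a 0) = bA (T.P'.a 0) ∧
        ∃ e' ∈ M, e'.1 = T.P'.a 0 ∧ rk (T.P'.a 0, T.P'.h 0) < rk e' ∧ e' ∉ T.edges ∧
          X' = {e'})) :
    IsBM E bA bH (symmDiff M (T.edges ∪ X ∪ X')) ∧
      MorePop rk (symmDiff M (T.edges ∪ X ∪ X')) M ∧ ¬ Popular E bA bH rk M :=
  type2_not_popular_general E bA bH rk M hM T X X' hX hX'
end

section
/- Let M be a b-matching of an instance (G,b,r) and let P be a path of type (3) with respect to M, with initial agent a_1 and first house h_1. Set P' = P if a_1 is unsaturated in M, and P' = P ∪ {e} otherwise, where e ∈ M is an edge incident with a_1 with r(e) > r(a_1,h_1). Then M ⊕ P' is a b-matching such that sig_{M ⊕ P'}(a_1) ≻ sig_M(a_1) and sig_{M ⊕ P'}(a) = sig_M(a) for every agent a ≠ a_1; hence M ⊕ P' is more popular than M and M is not popular. -/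
open Finset

section Aux

variable {A H : Type*} [DecidableEq A] [DecidableEq H]
variable {E M : Finset (A × H)} {rk : A × H → ℕ} {k : ℕ}

lemma filter_image_card {n : ℕ} (f : Fin n → A × H) (hf : Function.Injective f)
    (q : A × H → Prop) [DecidablePred q] :
    (((univ : Finset (Fin n)).image f).filter q).card
      = ∑ i : Fin n, if q (f i) then 1 else 0 := by
  have h1 : ((univ : Finset (Fin n)).image f).filter q
      = ((univ : Finset (Fin n)).filter fun i => q (f i)).image f := by
    ext x
    simp only [mem_filter, mem_image, mem_univ, true_and]
    constructor
    · rintro ⟨⟨i, rfl⟩, hq⟩; exact ⟨i, hq, rfl⟩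
    · rintro ⟨i, hq, rfl⟩; exact ⟨⟨i, rfl⟩, hq⟩
  rw [h1, Finset.card_image_of_injective _ hf, Finset.card_filter]

lemma fwd_count (P : EvenPath E M rk k) (q : A × H → Prop) [DecidablePred q]
    (hq : ∀ i : Fin k, q (P.a i.succ, P.h i.castSucc) ↔ q (P.a i.succ, P.h i.succ)) :
    (P.fwdEdges.filter q).card
      = (P.bwdEdges.filter q).card + (if q (P.a 0, P.h 0) then 1 else 0) := by
  rw [EvenPath.fwdEdges, EvenPath.bwdEdges,
    filter_image_card _ (fun i j h => P.fwd_inj i j h) q,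
    filter_image_card _ (fun i j h => P.bwd_inj i j h) q, Fin.sum_univ_succ]
  simp only [hq]
  exact add_comm _ _

lemma fwd_count_house (P : EvenPath E M rk k) (q : A × H → Prop) [DecidablePred q]
    (hq : ∀ i : Fin k, q (P.a i.succ, P.h i.castSucc) ↔ q (P.a i.castSucc, P.h i.castSucc)) :
    (P.fwdEdges.filter q).card
      = (P.bwdEdges.filter q).card
        + (if q (P.a (Fin.last k), P.h (Fin.last k)) then 1 else 0) := by
  rw [EvenPath.fwdEdges, EvenPath.bwdEdges,
    filter_image_card _ (fun i j h => P.fwd_inj i j h) q,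
    filter_image_card _ (fun i j h => P.bwd_inj i j h) q, Fin.sum_univ_castSucc]
  simp only [hq]

lemma fwd_disjoint (P : EvenPath E M rk k) : Disjoint P.fwdEdges M := by
  rw [Finset.disjoint_left]
  intro x hx hxM
  rw [EvenPath.fwdEdges, mem_image] at hx
  obtain ⟨i, -, rfl⟩ := hx
  exact P.fwd_not i hxM

lemma bwd_subset (P : EvenPath E M rk k) : P.bwdEdges ⊆ M := by
  intro x hx
  rw [EvenPath.bwdEdges, mem_image] at hx
  obtain ⟨i, -, rfl⟩ := hx
  exact P.bwd_mem i

lemma count_core (P : EvenPath E M rk k) (D : Finset (A × H)) (hDM : D ⊆ M)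
    (q : A × H → Prop) [DecidablePred q] :
    ((symmDiff M (P.fwdEdges ∪ D)).filter q).card + (D.filter q).card
      = (M.filter q).card + (P.fwdEdges.filter q).card := by
  have hFM : Disjoint P.fwdEdges M := fwd_disjoint P
  have h1 : symmDiff M (P.fwdEdges ∪ D) = (M \ D) ∪ P.fwdEdges := by
    ext x
    have hxF : x ∈ P.fwdEdges → x ∉ M := fun h => Finset.disjoint_left.mp hFM h
    have hxD : x ∈ D → x ∈ M := fun h => hDM h
    simp only [Finset.mem_symmDiff, mem_union, mem_sdiff]
    tauto
  rw [h1, filter_union]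
  rw [Finset.card_union_of_disjoint]
  · have h2 : (M \ D).filter q = M.filter q \ D.filter q := by
      ext x; simp only [mem_filter, mem_sdiff]; tauto
    have h3 : D.filter q ⊆ M.filter q := Finset.filter_subset_filter _ hDM
    rw [h2]
    have := Finset.card_sdiff_add_card_eq_card h3
    omega
  · exact Finset.disjoint_left.mpr fun x hx hx2 =>
      Finset.disjoint_left.mp hFM (Finset.mem_filter.mp hx2).1
        (Finset.mem_sdiff.mp (Finset.mem_filter.mp hx).1).1

lemma assemble {A H : Type*} [Fintype A] [DecidableEq A] [DecidableEq H]
    (E : Finset (A × H)) (bA : A → ℕ) (bH : H → ℕ) (rk : A × H → ℕ)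
    (M M' : Finset (A × H)) (a0 : A) (j0 : ℕ)
    (h1 : IsBM E bA bH M')
    (h2 : ∀ a, a ≠ a0 → ∀ i, cnt rk M' a i = cnt rk M a i)
    (h3 : ∀ j, j < j0 → cnt rk M' a0 j = cnt rk M a0 j)
    (h4 : cnt rk M a0 j0 < cnt rk M' a0 j0)
    (h5 : ∀ j, cnt rk M' a0 j < cnt rk M a0 j → j0 < j) :
    IsBM E bA bH M' ∧ Prefers rk M' M a0 ∧
      (∀ a, a ≠ a0 → ∀ i, cnt rk M' a i = cnt rk M a i) ∧
      MorePop rk M' M ∧ ¬ Popular E bA bH rk M := by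
  have hpref : Prefers rk M' M a0 := ⟨j0, h3, h4⟩
  have hempty : IsEmpty {a : A // Prefers rk M M' a} := by
    constructor
    rintro ⟨a, j, hpre, hlt⟩
    by_cases ha : a = a0
    · subst ha
      have hj : j0 < j := h5 j hlt
      have := hpre j0 hj
      omega
    · rw [h2 a ha j] at hlt; omega
  have hmp : MorePop rk M' M := by
    unfold MorePop
    have hz : Nat.card {a : A // Prefers rk M M' a} = 0 := by
      simp [Nat.card_eq_zero]
    haveI : Nonempty {a : A // Prefers rk M' M a} := ⟨⟨a0, hpref⟩⟩
    have hp : 0 < Nat.card {a : A // Prefers rk M' M a} := Nat.card_pos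
    omega
  refine ⟨h1, hpref, h2, hmp, ?_⟩
  rintro ⟨-, hpop⟩
  exact hpop M' h1 hmp

lemma main_aux {A H : Type*} [Fintype A] [Fintype H] [DecidableEq A] [DecidableEq H]
    (E : Finset (A × H)) (bA : A → ℕ) (bH : H → ℕ) (rk : A × H → ℕ)
    (M : Finset (A × H)) (hM : IsBM E bA bH M)
    (T : Type3 E M bA bH rk) (P' : Finset (A × H))
    (R : Finset (A × H)) (hRM : R ⊆ M) (hBR : Disjoint T.P.bwdEdges R)
    (hP'eq : P' = T.P.fwdEdges ∪ (T.P.bwdEdges ∪ R))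
    (hcase : (R = ∅ ∧ adeg M (T.P.a 0) ≠ bA (T.P.a 0)) ∨
      (∃ e, R = {e} ∧ e.1 = T.P.a 0 ∧ rk (T.P.a 0, T.P.h 0) < rk e)) :
    IsBM E bA bH (symmDiff M P') ∧ Prefers rk (symmDiff M P') M (T.P.a 0) ∧
      (∀ a : A, a ≠ T.P.a 0 → ∀ i : ℕ, cnt rk (symmDiff M P') a i = cnt rk M a i) ∧
      MorePop rk (symmDiff M P') M ∧ ¬ Popular E bA bH rk M := by
  obtain ⟨hsubM, hAM, hHM⟩ := hM
  have hDM : T.P.bwdEdges ∪ R ⊆ M := union_subset (bwd_subset T.P) hRM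
  -- counting with the agent-side bijection
  have hcount : ∀ (q : A × H → Prop) [DecidablePred q],
      (∀ i : Fin T.k, q (T.P.a i.succ, T.P.h i.castSucc) ↔ q (T.P.a i.succ, T.P.h i.succ)) →
      ((symmDiff M P').filter q).card + (R.filter q).card
        = (M.filter q).card + (if q (T.P.a 0, T.P.h 0) then 1 else 0) := by
    intro q _ hq
    have h1 := count_core T.P (T.P.bwdEdges ∪ R) hDM q
    rw [filter_union, Finset.card_union_of_disjoint
      (Finset.disjoint_filter_filter hBR), fwd_count T.P q hq] at h1
    rw [hP'eq]
    omega
  -- counting with the house-side bijection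
  have hcountH : ∀ (q : A × H → Prop) [DecidablePred q],
      (∀ i : Fin T.k, q (T.P.a i.succ, T.P.h i.castSucc) ↔ q (T.P.a i.castSucc, T.P.h i.castSucc)) →
      ((symmDiff M P').filter q).card + (R.filter q).card
        = (M.filter q).card
          + (if q (T.P.a (Fin.last T.k), T.P.h (Fin.last T.k)) then 1 else 0) := by
    intro q _ hq
    have h1 := count_core T.P (T.P.bwdEdges ∪ R) hDM q
    rw [filter_union, Finset.card_union_of_disjoint
      (Finset.disjoint_filter_filter hBR), fwd_count_house T.P q hq] at h1
    rw [hP'eq]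
    omega
  -- the cnt identity
  have hcnt : ∀ (a : A) (j : ℕ),
      cnt rk (symmDiff M P') a j + ((R.filter fun x => x.1 = a ∧ rk x = j).card)
        = cnt rk M a j
          + (if T.P.a 0 = a ∧ rk (T.P.a 0, T.P.h 0) = j then 1 else 0) := by
    intro a j
    exact hcount (fun x => x.1 = a ∧ rk x = j) (by intro i; simp only [T.P.rank_eq])
  -- the adeg identity
  have hadeg : ∀ a : A,
      adeg (symmDiff M P') a + ((R.filter fun x => x.1 = a).card)
        = adeg M a + (if T.P.a 0 = a then 1 else 0) := by
    intro a
    exact hcount (fun x => x.1 = a) (by intro i; rfl)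
  -- the hdeg identity
  have hhdeg : ∀ h : H,
      hdeg (symmDiff M P') h + ((R.filter fun x => x.2 = h).card)
        = hdeg M h + (if T.P.h (Fin.last T.k) = h then 1 else 0) := by
    intro h
    exact hcountH (fun x => x.2 = h) (by intro i; rfl)
  -- subset of E
  have hsub : symmDiff M P' ⊆ E := by
    intro x hx
    rw [Finset.mem_symmDiff] at hx
    rcases hx with ⟨hx, -⟩ | ⟨hx, -⟩
    · exact hsubM hx
    · rw [hP'eq, mem_union, mem_union] at hx
      rcases hx with hx | hx | hx
      · rw [EvenPath.fwdEdges, mem_image] at hx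
        obtain ⟨i, -, rfl⟩ := hx
        exact T.P.fwd_mem i
      · exact hsubM (bwd_subset T.P hx)
      · exact hsubM (hRM hx)
  -- the b-matching property
  have hbm : IsBM E bA bH (symmDiff M P') := by
    refine ⟨hsub, fun a => ?_, fun h => ?_⟩
    · have h1 := hadeg a
      rcases hcase with ⟨rfl, hne⟩ | ⟨e, rfl, he1, -⟩
      · simp only [Finset.filter_empty, Finset.card_empty] at h1
        by_cases ha : T.P.a 0 = a
        · subst ha
          have := hAM (T.P.a 0)
          rw [if_pos rfl] at h1
          omega
        · rw [if_neg ha] at h1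
          have := hAM a
          omega
      · rw [Finset.filter_singleton] at h1
        have := hAM a
        by_cases ha : T.P.a 0 = a
        · rw [if_pos (by rw [he1, ha]), if_pos ha] at h1
          simp at h1
          omega
        · rw [if_neg (fun hc => ha (he1 ▸ hc)), if_neg ha] at h1
          simp at h1
          omega
    · have h1 := hhdeg h
      have h2 : (R.filter fun x => x.2 = h).card ≥ 0 := Nat.zero_le _
      have := hHM h
      by_cases hh : T.P.h (Fin.last T.k) = h
      · subst hh
        have hu := T.unsat
        have := hHM (T.P.h (Fin.last T.k))
        rw [if_pos rfl] at h1
        omega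
      · rw [if_neg hh] at h1
        omega
  -- facts about R filters for cnt at specific ranks
  refine assemble E bA bH rk M _ (T.P.a 0) (rk (T.P.a 0, T.P.h 0)) hbm ?_ ?_ ?_ ?_
  · intro a ha i
    have h1 := hcnt a i
    rw [if_neg (fun hc => ha hc.1.symm)] at h1
    have h2 : (R.filter fun x => x.1 = a ∧ rk x = i).card = 0 := by
      rcases hcase with ⟨rfl, -⟩ | ⟨e, rfl, he1, -⟩
      · simp
      · rw [Finset.filter_singleton, if_neg (fun hc => ha (he1 ▸ hc.1).symm ), Finset.card_empty]
    omega
  · intro j hj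
    have h1 := hcnt (T.P.a 0) j
    rw [if_neg (fun hc => (Nat.ne_of_gt hj) hc.2)] at h1
    have h2 : (R.filter fun x => x.1 = T.P.a 0 ∧ rk x = j).card = 0 := by
      rcases hcase with ⟨rfl, -⟩ | ⟨e, rfl, he1, herk⟩
      · simp
      · rw [Finset.filter_singleton, if_neg (fun hc => by omega), Finset.card_empty]
    omega
  · have h1 := hcnt (T.P.a 0) (rk (T.P.a 0, T.P.h 0))
    rw [if_pos ⟨rfl, rfl⟩] at h1
    have h2 : (R.filter fun x => x.1 = T.P.a 0 ∧ rk x = rk (T.P.a 0, T.P.h 0)).card = 0 := by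
      rcases hcase with ⟨rfl, -⟩ | ⟨e, rfl, he1, herk⟩
      · simp
      · rw [Finset.filter_singleton, if_neg (fun hc => by omega), Finset.card_empty]
    omega
  · intro j hlt
    have h1 := hcnt (T.P.a 0) j
    rcases hcase with ⟨rfl, -⟩ | ⟨e, rfl, he1, herk⟩
    · simp only [Finset.filter_empty, Finset.card_empty] at h1
      split_ifs at h1 <;> omega
    · rw [Finset.filter_singleton] at h1
      split_ifs at h1 with hc1 hc2 hc2
      · simp only [Finset.card_singleton] at h1; omega
      · simp only [Finset.card_singleton] at h1; omega
      · simp only [Finset.card_empty] at h1; omega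
      · simp only [Finset.card_empty] at h1; omega

end Aux

/-- If `P` is a path of type (3) with respect to a b-matching `M`, and
`P'` is `P`, respectively `P ∪ {e}` for an `M`-edge `e` incident with the initial agent
`a_1` of rank worse than `r (a_1, h_1)`, according as `a_1` is unsaturated or saturated,
then `M ⊕ P'` is a b-matching in which the signature of `a_1` strictly improves and the
signature of every other agent is unchanged; hence `M ⊕ P'` is more popular than `M`
and `M` is not popular. -/
theorem type3_not_popular
    {A H : Type*} [Fintype A] [Fintype H] [DecidableEq A] [DecidableEq H]
    (E : Finset (A × H)) (bA : A → ℕ) (bH : H → ℕ) (rk : A × H → ℕ)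
    (hrk : ∀ e ∈ E, 0 < rk e)
    (M : Finset (A × H)) (hM : IsBM E bA bH M)
    (T : Type3 E M bA bH rk) (P' : Finset (A × H))
    (hP' : (adeg M (T.P.a 0) ≠ bA (T.P.a 0) ∧ P' = T.P.edges) ∨
      (adeg M (T.P.a 0) = bA (T.P.a 0) ∧
        ∃ e ∈ M, e.1 = T.P.a 0 ∧ rk (T.P.a 0, T.P.h 0) < rk e ∧ e ∉ T.P.edges ∧
          P' = insert e T.P.edges)) :
    IsBM E bA bH (symmDiff M P') ∧ Prefers rk (symmDiff M P') M (T.P.a 0) ∧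
      (∀ a : A, a ≠ T.P.a 0 → ∀ i : ℕ, cnt rk (symmDiff M P') a i = cnt rk M a i) ∧
      MorePop rk (symmDiff M P') M ∧ ¬ Popular E bA bH rk M := by
  rcases hP' with ⟨hunsat, hPe⟩ | ⟨hsat, e, heM, he1, herk, heP, hPe⟩
  · refine main_aux E bA bH rk M hM T P' ∅ (by simp) (by simp) ?_ (Or.inl ⟨rfl, hunsat⟩)
    rw [hPe, EvenPath.edges, union_empty]
  · refine main_aux E bA bH rk M hM T P' {e} (by simp [heM]) ?_ ?_
      (Or.inr ⟨e, rfl, he1, herk⟩)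
    · rw [Finset.disjoint_singleton_right]
      intro hc
      exact heP (mem_union.mpr (Or.inr hc))
    · rw [hPe, EvenPath.edges]
      ext x
      simp only [mem_insert, mem_union, mem_singleton]
      tauto
end

section
/- Let M be a b-matching of an instance (G,b,r) and let P be a path of type (4) with respect to M, with agent a_1, first house h_1 and last house h_k. Then M ⊕ P is a b-matching such that sig_{M ⊕ P}(a_1) ≻ sig_M(a_1) and sig_{M ⊕ P}(a) = sig_M(a) for every agent a ≠ a_1; hence M ⊕ P is more popular than M and M is not popular. -/
open Finset

section Aux

variable {A H : Type*} [DecidableEq A] [DecidableEq H]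
variable {E M : Finset (A × H)} {rk : A × H → ℕ}

lemma card_filter_image_univ {ι : Type*} [Fintype ι] (f : ι → A × H)
    (hf : Function.Injective f) (p : A × H → Prop) [DecidablePred p] :
    ((Finset.univ.image f).filter p).card = ∑ j, if p (f j) then 1 else 0 := by
  classical
  rw [Finset.filter_image, Finset.card_image_of_injective _ hf, Finset.card_filter]

lemma type4_count (T : Type4 E M rk) (p : A × H → Prop) [DecidablePred p] :
    ((symmDiff M T.edges).filter p).card
      + ((if p (T.P.a 0, T.P.h (Fin.last T.k)) then 1 else 0)
        + ∑ j : Fin T.k, if p (T.P.a j.succ, T.P.h j.castSucc) then 1 else 0)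
    = (M.filter p).card + ∑ j : Fin (T.k + 1), if p (T.P.a j, T.P.h j) then 1 else 0 := by
  classical
  have hFM : ∀ e ∈ T.P.fwdEdges, e ∉ M := by
    intro e he
    simp only [EvenPath.fwdEdges, Finset.mem_image, Finset.mem_univ, true_and] at he
    obtain ⟨i, rfl⟩ := he
    exact T.P.fwd_not i
  have hBM : ∀ e ∈ T.P.bwdEdges, e ∈ M := by
    intro e he
    simp only [EvenPath.bwdEdges, Finset.mem_image, Finset.mem_univ, true_and] at he
    obtain ⟨i, rfl⟩ := he
    exact T.P.bwd_mem i
  set c : A × H := (T.P.a 0, T.P.h (Fin.last T.k)) with hc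
  have hcB : c ∉ T.P.bwdEdges := T.clne
  have hcM : c ∈ M := T.cl
  have hDM : insert c T.P.bwdEdges ⊆ M := by
    intro e he
    rcases Finset.mem_insert.1 he with rfl | h
    · exact hcM
    · exact hBM e h
  have hedges : T.edges = T.P.fwdEdges ∪ insert c T.P.bwdEdges := by
    ext e
    simp only [Type4.edges, EvenPath.edges, Finset.mem_union, Finset.mem_insert,
      Finset.mem_singleton]
    tauto
  have hM' : symmDiff M T.edges = (M \ insert c T.P.bwdEdges) ∪ T.P.fwdEdges := by
    ext e
    have h1 := hFM e
    have h2 := @hDM e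
    simp only [Finset.mem_symmDiff, hedges, Finset.mem_union, Finset.mem_sdiff]
    tauto
  have hdisj : Disjoint (M \ insert c T.P.bwdEdges) T.P.fwdEdges := by
    rw [Finset.disjoint_right]
    intro e he hem
    exact hFM e he (Finset.mem_sdiff.1 hem).1
  have key1 : ((symmDiff M T.edges).filter p).card
      = ((M \ insert c T.P.bwdEdges).filter p).card + (T.P.fwdEdges.filter p).card := by
    rw [hM', Finset.filter_union, Finset.card_union_of_disjoint
      (Finset.disjoint_filter_filter hdisj)]
  have key2 : (M.filter p).card
      = ((M \ insert c T.P.bwdEdges).filter p).card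
        + ((insert c T.P.bwdEdges).filter p).card := by
    conv_lhs => rw [← Finset.sdiff_union_of_subset hDM]
    rw [Finset.filter_union, Finset.card_union_of_disjoint
      (Finset.disjoint_filter_filter Finset.sdiff_disjoint)]
  have key3 : ((insert c T.P.bwdEdges).filter p).card
      = (if p c then 1 else 0) + (T.P.bwdEdges.filter p).card := by
    rw [Finset.filter_insert]
    by_cases hpc : p c
    · rw [if_pos hpc, if_pos hpc,
        Finset.card_insert_of_notMem (fun h => hcB (Finset.mem_filter.1 h).1)]
      omega
    · rw [if_neg hpc, if_neg hpc]
      omega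
  have key4 : (T.P.fwdEdges.filter p).card
      = ∑ j : Fin (T.k + 1), if p (T.P.a j, T.P.h j) then 1 else 0 :=
    card_filter_image_univ _ (fun i j hij => T.P.fwd_inj i j hij) p
  have key5 : (T.P.bwdEdges.filter p).card
      = ∑ j : Fin T.k, if p (T.P.a j.succ, T.P.h j.castSucc) then 1 else 0 :=
    card_filter_image_univ _ (fun i j hij => T.P.bwd_inj i j hij) p
  omega

lemma type4_adeg (T : Type4 E M rk) (x : A) :
    adeg (symmDiff M T.edges) x = adeg M x := by
  classical
  have h : ((symmDiff M T.edges).filter (fun e => e.1 = x)).card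
      + ((if T.P.a 0 = x then 1 else 0)
        + ∑ j : Fin T.k, if T.P.a j.succ = x then 1 else 0)
      = (M.filter (fun e => e.1 = x)).card
        + ∑ j : Fin (T.k + 1), if T.P.a j = x then 1 else 0 :=
    type4_count T (fun e => e.1 = x)
  simp only [Fin.sum_univ_succ] at h
  simp only [adeg]
  split_ifs at h <;> omega

lemma type4_hdeg (T : Type4 E M rk) (x : H) :
    hdeg (symmDiff M T.edges) x = hdeg M x := by
  classical
  have h : ((symmDiff M T.edges).filter (fun e => e.2 = x)).card
      + ((if T.P.h (Fin.last T.k) = x then 1 else 0)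
        + ∑ j : Fin T.k, if T.P.h j.castSucc = x then 1 else 0)
      = (M.filter (fun e => e.2 = x)).card
        + ∑ j : Fin (T.k + 1), if T.P.h j = x then 1 else 0 :=
    type4_count T (fun e => e.2 = x)
  simp only [Fin.sum_univ_castSucc] at h
  simp only [hdeg]
  split_ifs at h <;> omega

lemma type4_cnt (T : Type4 E M rk) (a : A) (i : ℕ) :
    cnt rk (symmDiff M T.edges) a i
      + (if T.P.a 0 = a ∧ rk (T.P.a 0, T.P.h (Fin.last T.k)) = i then 1 else 0)
    = cnt rk M a i + (if T.P.a 0 = a ∧ rk (T.P.a 0, T.P.h 0) = i then 1 else 0) := by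
  classical
  have h : ((symmDiff M T.edges).filter (fun e => e.1 = a ∧ rk e = i)).card
      + ((if T.P.a 0 = a ∧ rk (T.P.a 0, T.P.h (Fin.last T.k)) = i then 1 else 0)
        + ∑ j : Fin T.k,
            if T.P.a j.succ = a ∧ rk (T.P.a j.succ, T.P.h j.castSucc) = i then 1 else 0)
      = (M.filter (fun e => e.1 = a ∧ rk e = i)).card
        + ∑ j : Fin (T.k + 1), if T.P.a j = a ∧ rk (T.P.a j, T.P.h j) = i then 1 else 0 :=
    type4_count T (fun e => e.1 = a ∧ rk e = i)
  simp only [Fin.sum_univ_succ] at h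
  simp only [T.P.rank_eq] at h
  simp only [cnt]
  split_ifs at h ⊢ <;> omega

end Aux

/-- If `P` is a path of type (4) with respect to a b-matching `M`, then
`M ⊕ P` is a b-matching in which the signature of the agent `a_1` strictly improves and
the signature of every other agent is unchanged; hence `M ⊕ P` is more popular than `M`
and `M` is not popular. -/
theorem type4_not_popular
    {A H : Type*} [Fintype A] [Fintype H] [DecidableEq A] [DecidableEq H]
    (E : Finset (A × H)) (bA : A → ℕ) (bH : H → ℕ) (rk : A × H → ℕ)
    (hrk : ∀ e ∈ E, 0 < rk e)
    (M : Finset (A × H)) (hM : IsBM E bA bH M)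
    (T : Type4 E M rk) :
    IsBM E bA bH (symmDiff M T.edges) ∧ Prefers rk (symmDiff M T.edges) M (T.P.a 0) ∧
      (∀ a : A, a ≠ T.P.a 0 → ∀ i : ℕ, cnt rk (symmDiff M T.edges) a i = cnt rk M a i) ∧
      MorePop rk (symmDiff M T.edges) M ∧ ¬ Popular E bA bH rk M := by
  classical
  have hTE : T.edges ⊆ E := by
    intro e he
    simp only [Type4.edges, EvenPath.edges, EvenPath.fwdEdges, EvenPath.bwdEdges,
      Finset.mem_union, Finset.mem_singleton, Finset.mem_image, Finset.mem_univ,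
      true_and] at he
    rcases he with (⟨i, rfl⟩ | ⟨i, rfl⟩) | rfl
    · exact T.P.fwd_mem i
    · exact hM.1 (T.P.bwd_mem i)
    · exact hM.1 T.cl
  have hsub : symmDiff M T.edges ⊆ E := by
    intro e he
    rcases Finset.mem_symmDiff.1 he with ⟨h1, _⟩ | ⟨h1, _⟩
    · exact hM.1 h1
    · exact hTE h1
  have hbm : IsBM E bA bH (symmDiff M T.edges) :=
    ⟨hsub, fun a => by rw [type4_adeg T a]; exact hM.2.1 a,
      fun h => by rw [type4_hdeg T h]; exact hM.2.2 h⟩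
  have hlt : rk (T.P.a 0, T.P.h 0) < rk (T.P.a 0, T.P.h (Fin.last T.k)) := T.rgt
  have hne : ∀ a, a ≠ T.P.a 0 → ∀ i,
      cnt rk (symmDiff M T.edges) a i = cnt rk M a i := by
    intro a ha i
    have h := type4_cnt T a i
    have h1 : ¬ (T.P.a 0 = a ∧ rk (T.P.a 0, T.P.h (Fin.last T.k)) = i) :=
      fun hh => ha hh.1.symm
    have h2 : ¬ (T.P.a 0 = a ∧ rk (T.P.a 0, T.P.h 0) = i) := fun hh => ha hh.1.symm
    rw [if_neg h1, if_neg h2] at h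
    omega
  have ha0 : ∀ i, cnt rk (symmDiff M T.edges) (T.P.a 0) i
      + (if rk (T.P.a 0, T.P.h (Fin.last T.k)) = i then 1 else 0)
      = cnt rk M (T.P.a 0) i + (if rk (T.P.a 0, T.P.h 0) = i then 1 else 0) := by
    intro i
    have h := type4_cnt T (T.P.a 0) i
    simpa using h
  have hgain : cnt rk (symmDiff M T.edges) (T.P.a 0) (rk (T.P.a 0, T.P.h 0))
      = cnt rk M (T.P.a 0) (rk (T.P.a 0, T.P.h 0)) + 1 := by
    have h := ha0 (rk (T.P.a 0, T.P.h 0))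
    rw [if_pos rfl, if_neg (by omega : ¬ rk (T.P.a 0, T.P.h (Fin.last T.k))
      = rk (T.P.a 0, T.P.h 0))] at h
    omega
  have hsame : ∀ i, i ≠ rk (T.P.a 0, T.P.h 0) →
      i ≠ rk (T.P.a 0, T.P.h (Fin.last T.k)) →
      cnt rk (symmDiff M T.edges) (T.P.a 0) i = cnt rk M (T.P.a 0) i := by
    intro i h1 h2
    have h := ha0 i
    rw [if_neg (fun hh => h2 hh.symm), if_neg (fun hh => h1 hh.symm)] at h
    omega
  have hpref : Prefers rk (symmDiff M T.edges) M (T.P.a 0) :=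
    ⟨rk (T.P.a 0, T.P.h 0),
      fun i hi => hsame i (by omega) (by omega), by omega⟩
  have hnopref : ∀ a, ¬ Prefers rk M (symmDiff M T.edges) a := by
    rintro a ⟨j, hbefore, hj⟩
    by_cases ha : a = T.P.a 0
    · subst ha
      by_cases h1 : rk (T.P.a 0, T.P.h (Fin.last T.k)) = j
      · subst h1
        have hb := hbefore (rk (T.P.a 0, T.P.h 0)) hlt
        omega
      · by_cases h2 : rk (T.P.a 0, T.P.h 0) = j
        · subst h2
          omega
        · have := hsame j (fun hh => h2 hh.symm) (fun hh => h1 hh.symm)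
          omega
    · have := hne a ha j
      omega
  have hempty : IsEmpty {a : A // Prefers rk M (symmDiff M T.edges) a} :=
    ⟨fun x => hnopref x.1 x.2⟩
  have hmp : MorePop rk (symmDiff M T.edges) M := by
    have h0 : Nat.card {a : A // Prefers rk M (symmDiff M T.edges) a} = 0 :=
      @Nat.card_of_isEmpty _ hempty
    have hnonempty : Nonempty {a : A // Prefers rk (symmDiff M T.edges) M a} :=
      ⟨⟨T.P.a 0, hpref⟩⟩
    unfold MorePop
    rw [h0]
    exact Nat.card_pos
  exact ⟨hbm, hpref, hne, hmp, fun hp => hp.2 _ hbm hmp⟩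
end

section
/- Let (K,Σ) be an exact 3-cover instance and (G,b,r) the graph instance constructed from it. Suppose J ⊆ {1,…,m} is an exact 3-cover of K. Define M as the union of: the rank-1 edges (a_{j_1},v_{k_1}), (a_{j_2},v_{k_2}), (a_{j_3},v_{k_3}) for every j ∈ J with T_j = {k_1,k_2,k_3}; the edges (a_{i_4},h_i) and (a_{i_4},h'_i) for every 1 ≤ i ≤ m; and the edges (a_{i_5}, g_{t(i)}) for i ∉ J, where t is a bijection from {1,…,m} \ J onto {1,…,m−|K|/3}. Then M is a popular b-matching of (G,b,r). -/
open Finset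

section X3C

/-- `gnum K m = m - |K| / 3`, the number of houses `g_t`. -/
def gnum (K : Type*) [Fintype K] (m : ℕ) : ℕ := m - Fintype.card K / 3

/-- The houses of the constructed instance: `v k` (for `k ∈ K`), `h i`, `h' i`
(for `1 ≤ i ≤ m`) and `g t` (for `1 ≤ t ≤ m - |K|/3`). -/
abbrev XH (K : Type*) (m gk : ℕ) := K ⊕ (Fin m ⊕ (Fin m ⊕ Fin gk))

/-- The agents of the constructed instance: `a i j` for `1 ≤ i ≤ m`, `1 ≤ j ≤ 5`. -/
abbrev XA (m : ℕ) := Fin m × Fin 5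

/-- The house `v_k`. -/
def xhv (K : Type*) (m gk : ℕ) (x : K) : XH K m gk := Sum.inl x

/-- The house `h_i`. -/
def xhh (K : Type*) (m gk : ℕ) (i : Fin m) : XH K m gk := Sum.inr (Sum.inl i)

/-- The house `h'_i`. -/
def xhh' (K : Type*) (m gk : ℕ) (i : Fin m) : XH K m gk := Sum.inr (Sum.inr (Sum.inl i))

/-- The house `g_t`. -/
def xhg (K : Type*) (m gk : ℕ) (t : Fin gk) : XH K m gk := Sum.inr (Sum.inr (Sum.inr t))

/-- The edge set of the constructed instance, where `trip i s` (`s = 1, 2, 3`) enumerates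
the three elements of the set `T_i`: for each `i`, rank-1 edges `(a_{i_s}, v_{trip i s})`
and rank-2 edges `(a_{i_s}, h_i)` for `s = 1, 2, 3`, a rank-1 edge `(a_{i_4}, h_i)`,
rank-2 edges `(a_{i_4}, h'_i)` and `(a_{i_5}, h'_i)`, and rank-1 edges `(a_{i_5}, g_t)`
for every `t`. -/
def xE (K : Type*) [Fintype K] [DecidableEq K] (m gk : ℕ) (trip : Fin m → Fin 3 → K) :
    Finset (XA m × XH K m gk) :=
  (Finset.univ : Finset (Fin m)).biUnion fun i =>
    ((Finset.univ : Finset (Fin 3)).image fun j =>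
        ((i, (j.castLE (by omega) : Fin 5)), xhv K m gk (trip i j))) ∪
    ((Finset.univ : Finset (Fin 3)).image fun j =>
        ((i, (j.castLE (by omega) : Fin 5)), xhh K m gk i)) ∪
    {((i, (3 : Fin 5)), xhh K m gk i), ((i, (3 : Fin 5)), xhh' K m gk i),
      ((i, (4 : Fin 5)), xhh' K m gk i)} ∪
    ((Finset.univ : Finset (Fin gk)).image fun t => ((i, (4 : Fin 5)), xhg K m gk t))

/-- The rank function of the constructed instance: edges to the houses `v_k` and `g_t`
have rank 1, edges to `h_i` have rank 1 from `a_{i_4}` and rank 2 otherwise, and edges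
to `h'_i` have rank 2. -/
def xRk (K : Type*) (m gk : ℕ) : XA m × XH K m gk → ℕ
  | (_, Sum.inl _) => 1
  | ((_, j), Sum.inr (Sum.inl _)) => if j = (3 : Fin 5) then 1 else 2
  | (_, Sum.inr (Sum.inr (Sum.inl _))) => 2
  | (_, Sum.inr (Sum.inr (Sum.inr _))) => 1

/-- The agent capacities: `a_{i_4}` has capacity 2, all other agents capacity 1. -/
def xbA (m : ℕ) : XA m → ℕ := fun q => if q.2 = (3 : Fin 5) then 2 else 1

/-- The house capacities: every house has capacity 1. -/
def xbH (K : Type*) (m gk : ℕ) : XH K m gk → ℕ := fun _ => 1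

/-- `J` is an exact 3-cover: `{T_j : j ∈ J}` is a partition of `K`, where
`T_j = {trip j 1, trip j 2, trip j 3}`. -/
def IsX3C {K : Type*} (m : ℕ) (trip : Fin m → Fin 3 → K) (J : Finset (Fin m)) : Prop :=
  ∀ x : K, ∃! j : Fin m, j ∈ J ∧ ∃ s : Fin 3, trip j s = x

/-- The b-matching built from an exact 3-cover `J` and a bijection `σ` from the
complement of `J` onto the houses `g_t`. -/
def xM (K : Type*) [Fintype K] [DecidableEq K] (m : ℕ) (trip : Fin m → Fin 3 → K)
    (J : Finset (Fin m)) (σ : Fin m → Fin (gnum K m)) :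
    Finset (XA m × XH K m (gnum K m)) :=
  (J.biUnion fun j => (Finset.univ : Finset (Fin 3)).image fun s =>
      ((j, (s.castLE (by omega) : Fin 5)), xhv K m (gnum K m) (trip j s))) ∪
  ((Finset.univ : Finset (Fin m)).biUnion fun i =>
      {((i, (3 : Fin 5)), xhh K m (gnum K m) i),
        ((i, (3 : Fin 5)), xhh' K m (gnum K m) i)}) ∪
  (((Finset.univ : Finset (Fin m)).filter fun i => i ∉ J).image fun i =>
      ((i, (4 : Fin 5)), xhg K m (gnum K m) (σ i)))

end X3C

/-!
In `xM` only the agents `a_{i_1}, a_{i_2}, a_{i_3}` with `i ∉ J` and `a_{j_5}` with `j ∈ J` have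
signature `(0, 0)`; every other agent holds all its edges or is saturated by rank-1 edges, so it
never prefers a rival b-matching `M'`. A winner that does not take a house `g_t` in `M'` takes a
house `v_k`, `h_i` or `h'_j` from its `xM`-holder, who cannot make up for the loss and prefers
`xM`; distinct winners rob distinct holders. The winners `a_{j_5}` taking a house `g_t` are
paid for by counting: there are only `m - |K|/3 = |{i ∉ J}|` such houses, so at least as many
agents `a_{i_5}` with `i ∉ J` lose their rank-1 edge.
-/

theorem card_inter_le_card_compl_sdiff {α : Type*} [Fintype α] [DecidableEq α]
    {S J : Finset α} (h : #S ≤ #Jᶜ) : #(S ∩ J) ≤ #(Jᶜ \ S) := by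
  have hS := card_inter_add_card_sdiff S J
  have hJ := card_inter_add_card_sdiff Jᶜ S
  rw [inter_comm, ← sdiff_eq_inter_compl] at hJ
  omega

section Popularity

variable {A H : Type*} [DecidableEq A] {rk : A × H → ℕ} {M M' E : Finset (A × H)} {a : A}

theorem not_morePop_of_card_le [Fintype A] [DecidablePred (Prefers rk M' M)]
    [DecidablePred (Prefers rk M M')]
    (h : #{a | Prefers rk M' M a} ≤ #{a | Prefers rk M M' a}) : ¬ MorePop rk M' M := by
  simpa only [MorePop, Nat.card_eq_fintype_card, Fintype.card_subtype, not_lt] using h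

theorem cnt_pos_of_mem {h : H} (he : (a, h) ∈ M) : 0 < cnt rk M a (rk (a, h)) :=
  card_pos.2 ⟨(a, h), mem_filter.2 ⟨he, rfl, rfl⟩⟩

theorem exists_mem_of_cnt_pos {r : ℕ} (h : 0 < cnt rk M a r) :
    ∃ h, (a, h) ∈ M ∧ rk (a, h) = r := by
  obtain ⟨e, he⟩ := card_pos.1 h
  obtain ⟨hM, rfl, hr⟩ := mem_filter.1 he
  exact ⟨e.2, hM, hr⟩

theorem cnt_eq_zero_of_ne {r : ℕ} (hr : ∀ e, rk e ≠ r) : cnt rk M a r = 0 :=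
  card_eq_zero.2 <| filter_eq_empty_iff.2 fun e _ he => hr e he.2

theorem cnt_add_cnt_le_adeg {r s : ℕ} (hrs : r ≠ s) :
    cnt rk M a r + cnt rk M a s ≤ adeg M a := by
  classical
  rw [cnt, cnt, adeg, ← card_union_of_disjoint]
  · exact card_le_card fun e => by simp only [mem_union, mem_filter]; tauto
  · exact disjoint_filter.2 fun e _ h h' => hrs (h.2.symm.trans h'.2)

theorem cnt_le_adeg (r : ℕ) : cnt rk M a r ≤ adeg M a :=
  card_le_card fun _ he => by
    obtain ⟨he, hea, -⟩ := mem_filter.1 he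
    exact mem_filter.2 ⟨he, hea⟩

theorem adeg_le_card {S : Finset H} (hS : ∀ h, (a, h) ∈ M → h ∈ S) :
    adeg M a ≤ S.card := by
  refine card_le_card_of_injOn Prod.snd (fun e he => ?_) fun e he e' he' h => ?_
  · obtain ⟨hM, rfl⟩ := mem_filter.1 he
    exact hS e.2 hM
  · exact Prod.ext ((mem_filter.1 he).2.trans (mem_filter.1 he').2.symm) h

theorem exists_mem_not_mem_of_prefers (hpref : Prefers rk M' M a) :
    ∃ h, (a, h) ∈ M' ∧ (a, h) ∉ M := by
  obtain ⟨j, -, hj⟩ := hpref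
  obtain ⟨e, he, he'⟩ := not_subset.1 fun hsub => (card_le_card hsub).not_gt hj
  obtain ⟨hM', rfl, hr⟩ := mem_filter.1 he
  exact ⟨e.2, hM', fun h => he' (mem_filter.2 ⟨h, rfl, hr⟩)⟩

theorem not_prefers_of_forall_cnt_le (h : ∀ r, cnt rk M' a r ≤ cnt rk M a r) :
    ¬ Prefers rk M' M a := fun ⟨j, _, hj⟩ => (h j).not_gt hj

theorem prefers_of_cnt_le_of_cnt_lt {r : ℕ} (hle : ∀ i < r, cnt rk M' a i ≤ cnt rk M a i)
    (hlt : cnt rk M' a r < cnt rk M a r) : Prefers rk M M' a := by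
  classical
  have hex : ∃ n, cnt rk M' a n ≠ cnt rk M a n := ⟨r, hlt.ne⟩
  refine ⟨Nat.find hex, fun i hi => (not_not.1 (Nat.find_min hex hi)).symm, ?_⟩
  rcases (Nat.find_min' hex hlt.ne).lt_or_eq with h | h
  · exact lt_of_le_of_ne (hle _ h) (Nat.find_spec hex)
  · exact h ▸ hlt

theorem prefers_of_mem_of_not_mem (hE : M' ⊆ E) {h : H} (hM : (a, h) ∈ M) (hM' : (a, h) ∉ M')
    (hbest : ∀ f ∈ E, f.1 = a → rk f ≤ rk (a, h) → f ∈ M) : Prefers rk M M' a := by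
  have hsub : ∀ i ≤ rk (a, h), (M'.filter fun e => e.1 = a ∧ rk e = i) ⊆
      (M.filter fun e => e.1 = a ∧ rk e = i) := fun i hi f hf => by
    obtain ⟨hf, hfa, hfi⟩ := mem_filter.1 hf
    exact mem_filter.2 ⟨hbest f (hE hf) hfa (hfi ▸ hi), hfa, hfi⟩
  refine prefers_of_cnt_le_of_cnt_lt (fun i hi => card_le_card (hsub i hi.le))
    (card_lt_card ⟨hsub _ le_rfl, fun h' => ?_⟩)
  exact hM' (mem_filter.1 (h' (mem_filter.2 ⟨hM, rfl, rfl⟩))).1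

theorem not_prefers_of_forall_mem (hE : M' ⊆ E) (hall : ∀ f ∈ E, f.1 = a → f ∈ M) :
    ¬ Prefers rk M' M a :=
  not_prefers_of_forall_cnt_le fun _ => card_le_card fun f hf => by
    obtain ⟨hf, hfa, hfi⟩ := mem_filter.1 hf
    exact mem_filter.2 ⟨hall f (hE hf) hfa, hfa, hfi⟩

theorem not_prefers_of_adeg_le_cnt_one (hrk : ∀ e, rk e ≠ 0) (h : adeg M' a ≤ cnt rk M a 1) :
    ¬ Prefers rk M' M a := by
  rintro ⟨j, hlt, hj⟩
  match j with
  | 0 => simp [cnt_eq_zero_of_ne hrk] at hj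
  | 1 => exact (((cnt_le_adeg 1).trans h).not_gt hj)
  | j + 2 =>
    have := cnt_add_cnt_le_adeg (rk := rk) (M := M') (a := a) (show 1 ≠ j + 2 by omega)
    have := hlt 1 (by omega)
    omega

end Popularity

section HouseCapacityOne

variable {A H : Type*} [DecidableEq H] {M : Finset (A × H)} {h : H}

theorem hdeg_le_one (hh : ∀ a a', (a, h) ∈ M → (a', h) ∈ M → a = a') :
    hdeg M h ≤ 1 :=
  card_le_one.2 fun e he e' he' => by
    obtain ⟨hM, rfl⟩ := mem_filter.1 he
    obtain ⟨hM', h'⟩ := mem_filter.1 he'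
    exact Prod.ext (hh _ _ hM (h' ▸ hM')) h'.symm

theorem eq_of_hdeg_le_one (hM : hdeg M h ≤ 1) {a a' : A} (ha : (a, h) ∈ M)
    (ha' : (a', h) ∈ M) : a = a' :=
  congrArg Prod.fst <|
    card_le_one.1 hM _ (mem_filter.2 ⟨ha, rfl⟩) _ (mem_filter.2 ⟨ha', rfl⟩)

end HouseCapacityOne

theorem xRk_ne_zero {K : Type*} {m gk : ℕ} (e : XA m × XH K m gk) : xRk K m gk e ≠ 0 := by
  rcases e with ⟨⟨i, c⟩, x | j | j | t⟩ <;> simp only [xRk] <;> (try split_ifs) <;> decide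

section Instance

variable {K : Type*} [Fintype K] [DecidableEq K] {m gk : ℕ} {trip : Fin m → Fin 3 → K}
  {i : Fin m} {h : XH K m gk}

/-- Columns `0, 1, 2` of `Fin 5` are the agents `a_{i_1}, a_{i_2}, a_{i_3}`; columns `3` and `4`
are `a_{i_4}` and `a_{i_5}`. -/
abbrev low (s : Fin 3) : Fin 5 := s.castLE (by omega)

theorem low_injective : Function.Injective low := Fin.castLE_injective _

@[simp] theorem low_ne_three (s : Fin 3) : low s ≠ 3 := by fin_cases s <;> decide
@[simp] theorem low_ne_four (s : Fin 3) : low s ≠ 4 := by fin_cases s <;> decide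
@[simp] theorem four_ne_low (s : Fin 3) : 4 ≠ low s := (low_ne_four s).symm

theorem col_cases (c : Fin 5) : (∃ s, c = low s) ∨ c = 3 ∨ c = 4 := by
  fin_cases c
  exacts [.inl ⟨0, rfl⟩, .inl ⟨1, rfl⟩, .inl ⟨2, rfl⟩, .inr (.inl rfl), .inr (.inr rfl)]

theorem mem_xE_low {s : Fin 3} :
    ((i, low s), h) ∈ xE K m gk trip ↔ h = xhv K m gk (trip i s) ∨ h = xhh K m gk i := by
  simp [xE, low_injective.eq_iff, ← and_or_left, @eq_comm _ h]

theorem mem_xE_three :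
    ((i, 3), h) ∈ xE K m gk trip ↔ h = xhh K m gk i ∨ h = xhh' K m gk i := by
  simp [xE, ← and_or_left, @eq_comm _ h]

theorem mem_xE_four :
    ((i, 4), h) ∈ xE K m gk trip ↔ h = xhh' K m gk i ∨ ∃ t, h = xhg K m gk t := by
  simp [xE, @eq_comm _ i, ← and_or_left, @eq_comm _ h]

variable {J : Finset (Fin m)} {σ : Fin m → Fin (gnum K m)} {h : XH K m (gnum K m)}

theorem mem_xM_low {s : Fin 3} :
    ((i, low s), h) ∈ xM K m trip J σ ↔ i ∈ J ∧ h = xhv K m (gnum K m) (trip i s) := by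
  simp [xM, low_injective.eq_iff, @eq_comm _ h]

theorem mem_xM_three :
    ((i, 3), h) ∈ xM K m trip J σ ↔
      h = xhh K m (gnum K m) i ∨ h = xhh' K m (gnum K m) i := by
  simp [xM, ← and_or_left, @eq_comm _ h]

theorem mem_xM_four :
    ((i, 4), h) ∈ xM K m trip J σ ↔ i ∉ J ∧ h = xhg K m (gnum K m) (σ i) := by
  simp [xM, @eq_comm _ h]

end Instance

section Matching

variable {K : Type*} [Fintype K] [DecidableEq K] {m : ℕ} {trip : Fin m → Fin 3 → K}
  {J : Finset (Fin m)} {σ : Fin m → Fin (gnum K m)}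

theorem xM_subset_xE : xM K m trip J σ ⊆ xE K m (gnum K m) trip := by
  rintro ⟨⟨i, c⟩, h⟩ he
  rcases col_cases c with ⟨s, rfl⟩ | rfl | rfl
  · exact mem_xE_low.2 (.inl (mem_xM_low.1 he).2)
  · exact mem_xE_three.2 (mem_xM_three.1 he)
  · exact mem_xE_four.2 (.inr ⟨_, (mem_xM_four.1 he).2⟩)

omit [DecidableEq K] in
theorem card_J_mul_three (htrip : ∀ i, Function.Injective (trip i)) (hJ : IsX3C m trip J) :
    J.card * 3 = Fintype.card K := by
  rw [← card_univ, ← Fintype.card_fin 3, ← card_univ (α := Fin 3), ← card_product]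
  refine card_bij (fun p _ => trip p.1 p.2) (fun _ _ => mem_univ _) ?_ ?_
  · rintro ⟨j, s⟩ hp ⟨j', s'⟩ hp' hx
    obtain ⟨hj, -⟩ := mem_product.1 hp
    obtain ⟨hj', -⟩ := mem_product.1 hp'
    obtain rfl : j = j' := (hJ _).unique ⟨hj, s, rfl⟩ ⟨hj', s', hx.symm⟩
    exact Prod.ext rfl (htrip j hx)
  · intro x _
    obtain ⟨j, ⟨hj, s, hs⟩, -⟩ := hJ x
    exact ⟨(j, s), mem_product.2 ⟨hj, mem_univ s⟩, hs⟩

omit [DecidableEq K] in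
theorem gnum_eq_card_compl (htrip : ∀ i, Function.Injective (trip i)) (hJ : IsX3C m trip J) :
    gnum K m = #Jᶜ := by
  rw [gnum, ← card_J_mul_three htrip hJ, Nat.mul_div_cancel _ three_pos, card_compl,
    Fintype.card_fin]

theorem isBM_xM (htrip : ∀ i, Function.Injective (trip i)) (hJ : IsX3C m trip J)
    (hσ : Set.InjOn σ {i | i ∉ J}) :
    IsBM (xE K m (gnum K m) trip) (xbA m) (xbH K m (gnum K m)) (xM K m trip J σ) := by
  refine ⟨xM_subset_xE, fun ⟨i, c⟩ => ?_, fun h => hdeg_le_one ?_⟩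
  · rcases col_cases c with ⟨s, rfl⟩ | rfl | rfl
    · exact (adeg_le_card (S := {xhv K m _ (trip i s)}) fun h he => by
        simp [(mem_xM_low.1 he).2]).trans (by simp [xbA])
    · exact (adeg_le_card (S := {xhh K m _ i, xhh' K m _ i}) fun h he => by
        simpa using mem_xM_three.1 he).trans ((card_le_two).trans (by simp [xbA]))
    · exact (adeg_le_card (S := {xhg K m _ (σ i)}) fun h he => by
        simp [(mem_xM_four.1 he).2]).trans (by simp [xbA])
  · rintro ⟨i, c⟩ ⟨i', c'⟩ ha ha'
    rcases col_cases c with ⟨s, rfl⟩ | rfl | rfl <;>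
      rcases col_cases c' with ⟨s', rfl⟩ | rfl | rfl <;>
      simp only [mem_xM_low, mem_xM_three, mem_xM_four] at ha ha' <;>
      simp_all [xhv, xhh, xhh', xhg]
    · obtain rfl : i = i' := (hJ _).unique ⟨ha.1, s, rfl⟩ ⟨ha'.1, s', ha.2⟩
      exact ⟨rfl, htrip i ha.2.symm⟩
    · rcases ha with rfl | rfl <;> simp_all
    · exact (hσ ha'.1 ha.1 ha.2).symm

end Matching

section Votes

variable {K : Type*} [Fintype K] [DecidableEq K] {m : ℕ} {trip : Fin m → Fin 3 → K}
  {J : Finset (Fin m)} {σ : Fin m → Fin (gnum K m)} {M' : Finset (XA m × XH K m (gnum K m))}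
  {i : Fin m}

local notation "rk" => xRk K m (gnum K m)
local notation "M" => xM K m trip J σ

theorem not_prefers_three (hE : M' ⊆ xE K m (gnum K m) trip) : ¬ Prefers rk M' M (i, 3) :=
  not_prefers_of_forall_mem hE fun ⟨a, _⟩ hf hfa => by
    obtain rfl : a = (i, 3) := hfa
    exact mem_xM_three.2 (mem_xE_three.1 hf)

theorem not_mem_of_prefers_low {s : Fin 3} (hA : adeg M' (i, low s) ≤ 1)
    (hp : Prefers rk M' M (i, low s)) : i ∉ J := fun hi =>
  not_prefers_of_adeg_le_cnt_one xRk_ne_zero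
    (hA.trans (cnt_pos_of_mem (mem_xM_low.2 ⟨hi, rfl⟩))) hp

theorem mem_of_prefers_four (hA : adeg M' (i, 4) ≤ 1) (hp : Prefers rk M' M (i, 4)) : i ∈ J :=
  by_contra fun hi => not_prefers_of_adeg_le_cnt_one xRk_ne_zero
    (hA.trans (cnt_pos_of_mem (mem_xM_four.2 ⟨hi, rfl⟩))) hp

theorem prefers_xM_of_not_mem (hE : M' ⊆ xE K m (gnum K m) trip) {b : XA m}
    {h : XH K m (gnum K m)} (hb : b.2 ≠ 4) (hM : (b, h) ∈ M) (hM' : (b, h) ∉ M') :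
    Prefers rk M M' b := by
  refine prefers_of_mem_of_not_mem hE hM hM' fun ⟨a, f⟩ hf hfa hrk => ?_
  obtain rfl : a = b := hfa
  obtain ⟨i, c⟩ := a
  rcases col_cases c with ⟨s, rfl⟩ | rfl | rfl
  · obtain ⟨hi, rfl⟩ := mem_xM_low.1 hM
    rcases mem_xE_low.1 hf with rfl | rfl
    · exact hM
    · simp [xRk, xhh, xhv] at hrk
  · exact mem_xM_three.2 (mem_xE_three.1 hf)
  · exact absurd rfl hb

theorem prefers_xM_four (hi : i ∉ J) (h0 : cnt rk M' (i, 4) 1 = 0) :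
    Prefers rk M M' (i, 4) := by
  refine prefers_of_cnt_le_of_cnt_lt (r := 1) (fun j hj => ?_) ?_
  · simp [Nat.lt_one_iff.1 hj, cnt_eq_zero_of_ne xRk_ne_zero]
  · exact h0 ▸ cnt_pos_of_mem (mem_xM_four.2 ⟨hi, rfl⟩)

theorem exists_xM_holder (hJ : IsX3C m trip J) {h : XH K m (gnum K m)}
    (hh : ∀ t, h ≠ xhg K m (gnum K m) t) : ∃ b : XA m, b.2 ≠ 4 ∧ (b, h) ∈ M := by
  rcases h with x | i | i | t
  · obtain ⟨j, ⟨hj, s, rfl⟩, -⟩ := hJ x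
    exact ⟨(j, low s), low_ne_four s, mem_xM_low.2 ⟨hj, rfl⟩⟩
  · exact ⟨(i, 3), fun h => by simp at h, mem_xM_three.2 (.inl rfl)⟩
  · exact ⟨(i, 3), fun h => by simp at h, mem_xM_three.2 (.inr rfl)⟩
  · exact absurd rfl (hh t)

theorem col_eq_four_of_mem_xE_xhg {a : XA m} {t : Fin (gnum K m)}
    (ha : (a, xhg K m (gnum K m) t) ∈ xE K m (gnum K m) trip) : a.2 = 4 := by
  obtain ⟨i, c⟩ := a
  rcases col_cases c with ⟨s, rfl⟩ | rfl | rfl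
  · simp [mem_xE_low, xhg, xhv, xhh] at ha
  · simp [mem_xE_three, xhg, xhh, xhh'] at ha
  · rfl

theorem not_mem_of_prefers_of_mem_xhh (hE : M' ⊆ xE K m (gnum K m) trip)
    (hA : ∀ a, adeg M' a ≤ xbA m a) {a : XA m} (hp : Prefers rk M' M a)
    (ha : (a, xhh K m (gnum K m) i) ∈ M') : i ∉ J := by
  obtain ⟨i', c⟩ := a
  rcases col_cases c with ⟨s, rfl⟩ | rfl | rfl
  · obtain rfl : i = i' := by simpa [xhh, xhv] using mem_xE_low.1 (hE ha)
    exact not_mem_of_prefers_low ((hA _).trans (by simp [xbA])) hp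
  · exact absurd hp (not_prefers_three hE)
  · simpa [mem_xE_four, xhh, xhh', xhg] using hE ha

theorem mem_of_prefers_of_mem_xhh' (hE : M' ⊆ xE K m (gnum K m) trip)
    (hA : ∀ a, adeg M' a ≤ xbA m a) {a : XA m} (hp : Prefers rk M' M a)
    (ha : (a, xhh' K m (gnum K m) i) ∈ M') : i ∈ J := by
  obtain ⟨i', c⟩ := a
  rcases col_cases c with ⟨s, rfl⟩ | rfl | rfl
  · simpa [mem_xE_low, xhh', xhh, xhv] using hE ha
  · exact absurd hp (not_prefers_three hE)
  · obtain rfl : i = i' := by simpa [mem_xE_four, xhh', xhg] using hE ha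
    exact mem_of_prefers_four ((hA _).trans (by simp [xbA])) hp

end Votes

section Counting

variable {K : Type*} [Fintype K] [DecidableEq K] {m : ℕ} {trip : Fin m → Fin 3 → K}
  {J : Finset (Fin m)} {σ : Fin m → Fin (gnum K m)} {M' : Finset (XA m × XH K m (gnum K m))}

local notation "rk" => xRk K m (gnum K m)
local notation "M" => xM K m trip J σ

theorem card_rankOne_four_le (hE : M' ⊆ xE K m (gnum K m) trip)
    (hH : ∀ h, hdeg M' h ≤ 1) : #{i | 0 < cnt rk M' (i, 4) 1} ≤ gnum K m := by
  refine (card_le_card_of_forall_subsingleton (t := univ)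
    (fun i t => ((i, 4), xhg K m (gnum K m) t) ∈ M') (fun i hi => ?_) ?_).trans_eq
    (card_fin _)
  · obtain ⟨h, hM', hrk⟩ := exists_mem_of_cnt_pos (mem_filter.1 hi).2
    rcases mem_xE_four.1 (hE hM') with rfl | ⟨t, rfl⟩
    · simp [xRk, xhh'] at hrk
    · exact ⟨t, mem_univ t, hM'⟩
  · rintro t - i ⟨-, hi⟩ i' ⟨-, hi'⟩
    exact congrArg Prod.fst (eq_of_hdeg_le_one (hH _) hi hi')

theorem card_prefers_rankOne_four_le (htrip : ∀ i, Function.Injective (trip i))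
    (hJ : IsX3C m trip J)
    (hM' : IsBM (xE K m (gnum K m) trip) (xbA m) (xbH K m (gnum K m)) M')
    [DecidablePred (Prefers rk M' M)] [DecidablePred (Prefers rk M M')] :
    #{a | Prefers rk M' M a ∧ a.2 = 4 ∧ 0 < cnt rk M' a 1} ≤
      #{a | Prefers rk M M' a ∧ a.2 = 4} := by
  obtain ⟨hE, hA, hH⟩ := hM'
  set S : Finset (Fin m) := {i | 0 < cnt rk M' (i, 4) 1}
  have hS : #S ≤ #Jᶜ := gnum_eq_card_compl htrip hJ ▸ card_rankOne_four_le hE hH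
  calc _ ≤ #(S ∩ J) := by
        refine card_le_card_of_injOn Prod.fst (fun a ha => ?_) fun a ha a' ha' h => ?_
        · obtain ⟨hp, h4, hpos⟩ := (mem_filter.1 ha).2
          obtain ⟨i, c⟩ := a
          obtain rfl : c = 4 := h4
          exact mem_inter.2 ⟨mem_filter.2 ⟨mem_univ i, hpos⟩,
            mem_of_prefers_four ((hA _).trans (by simp [xbA])) hp⟩
        · exact Prod.ext h (((mem_filter.1 ha).2.2.1).trans (mem_filter.1 ha').2.2.1.symm)
    _ ≤ #(Jᶜ \ S) := card_inter_le_card_compl_sdiff hS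
    _ ≤ _ := by
        refine card_le_card_of_injOn (fun i => (i, 4)) (fun i hi => ?_)
          fun i _ i' _ h => congrArg Prod.fst h
        obtain ⟨hi, hS⟩ := mem_sdiff.1 hi
        refine mem_filter.2 ⟨mem_univ _, prefers_xM_four (mem_compl.1 hi) ?_, rfl⟩
        simpa [S] using hS

theorem card_prefers_of_not_rankOne_four_le (hJ : IsX3C m trip J)
    (hM' : IsBM (xE K m (gnum K m) trip) (xbA m) (xbH K m (gnum K m)) M')
    [DecidablePred (Prefers rk M' M)] [DecidablePred (Prefers rk M M')] :
    #{a | Prefers rk M' M a ∧ ¬(a.2 = 4 ∧ 0 < cnt rk M' a 1)} ≤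
      #{a | Prefers rk M M' a ∧ ¬a.2 = 4} := by
  obtain ⟨hE, hA, hH⟩ := hM'
  refine card_le_card_of_forall_subsingleton
    (fun a b => ∃ h, (a, h) ∈ M' ∧ (a, h) ∉ M ∧ (b, h) ∈ M) (fun a ha => ?_) ?_
  · obtain ⟨hp, hnot⟩ := (mem_filter.1 ha).2
    obtain ⟨h, haM', haM⟩ := exists_mem_not_mem_of_prefers hp
    have hg : ∀ t, h ≠ xhg K m (gnum K m) t := by
      rintro t rfl
      obtain ⟨i, c⟩ := a
      exact hnot ⟨col_eq_four_of_mem_xE_xhg (hE haM'), cnt_pos_of_mem haM'⟩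
    obtain ⟨b, hb4, hbM⟩ := exists_xM_holder hJ hg
    have hbM' : (b, h) ∉ M' := fun hbM' => haM (eq_of_hdeg_le_one (hH h) hbM' haM' ▸ hbM)
    exact ⟨b, mem_filter.2 ⟨mem_univ b, prefers_xM_of_not_mem hE hb4 hbM hbM', hb4⟩,
      h, haM', haM, hbM⟩
  · -- Only `a_{i_4}` holds two houses of `xM`; a winner taking `h_i` has `i ∉ J`, one taking
    -- `h'_i` has `i ∈ J`.
    rintro ⟨i, c⟩ hb a ⟨ha, h, haM', -, hbM⟩ a' ⟨ha', h', haM'', -, hbM'⟩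
    have hp := (mem_filter.1 ha).2.1
    have hp' := (mem_filter.1 ha').2.1
    rcases col_cases c with ⟨s, rfl⟩ | rfl | rfl
    · obtain ⟨-, rfl⟩ := mem_xM_low.1 hbM
      obtain ⟨-, rfl⟩ := mem_xM_low.1 hbM'
      exact eq_of_hdeg_le_one (hH _) haM' haM''
    · rcases mem_xM_three.1 hbM with rfl | rfl <;> rcases mem_xM_three.1 hbM' with rfl | rfl
      · exact eq_of_hdeg_le_one (hH _) haM' haM''
      · exact absurd (mem_of_prefers_of_mem_xhh' hE hA hp' haM'')
          (not_mem_of_prefers_of_mem_xhh hE hA hp haM')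
      · exact absurd (mem_of_prefers_of_mem_xhh' hE hA hp haM')
          (not_mem_of_prefers_of_mem_xhh hE hA hp' haM'')
      · exact eq_of_hdeg_le_one (hH _) haM' haM''
    · exact absurd rfl (mem_filter.1 hb).2.2

theorem card_prefers_le (htrip : ∀ i, Function.Injective (trip i)) (hJ : IsX3C m trip J)
    (hM' : IsBM (xE K m (gnum K m) trip) (xbA m) (xbH K m (gnum K m)) M')
    [DecidablePred (Prefers rk M' M)] [DecidablePred (Prefers rk M M')] :
    #{a | Prefers rk M' M a} ≤ #{a | Prefers rk M M' a} := by
  have hW := card_filter_add_card_filter_not (s := {a | Prefers rk M' M a})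
    fun a => a.2 = 4 ∧ 0 < cnt rk M' a 1
  have hL := card_filter_add_card_filter_not (s := {a | Prefers rk M M' a})
    fun a : XA m => a.2 = 4
  simp only [filter_filter] at hW hL
  have hfour := card_prefers_rankOne_four_le (σ := σ) htrip hJ hM'
  have hrest := card_prefers_of_not_rankOne_four_le (σ := σ) hJ hM'
  omega

end Counting

theorem x3c_cover_gives_popular_general
    {K : Type*} [Fintype K] [DecidableEq K] (m : ℕ) (trip : Fin m → Fin 3 → K)
    (htrip : ∀ i : Fin m, Function.Injective (trip i))
    (J : Finset (Fin m)) (hJ : IsX3C m trip J)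
    (σ : Fin m → Fin (gnum K m))
    (hσ : Set.BijOn σ {i : Fin m | i ∉ J} Set.univ) :
    Popular (xE K m (gnum K m) trip) (xbA m) (xbH K m (gnum K m)) (xRk K m (gnum K m))
      (xM K m trip J σ) := by
  classical
  exact ⟨isBM_xM htrip hJ hσ.injOn, fun M' hM' =>
    not_morePop_of_card_le (card_prefers_le htrip hJ hM')⟩

/-- If `J` is an exact 3-cover of `K`, then the b-matching `xM` built
from `J` (matching, for `j ∈ J`, the agents `a_{j_1}, a_{j_2}, a_{j_3}` to the elements
of `T_j`; matching every `a_{i_4}` to both `h_i` and `h'_i`; and matching `a_{i_5}` for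
`i ∉ J` to the house `g_{σ i}`, `σ` being a bijection from the complement of `J` onto
the `g`-houses) is a popular b-matching of the constructed instance. -/
theorem x3c_cover_gives_popular
    {K : Type*} [Fintype K] [DecidableEq K] (m : ℕ) (trip : Fin m → Fin 3 → K)
    (htrip : ∀ i : Fin m, Function.Injective (trip i))
    (h3 : 3 ∣ Fintype.card K)
    (J : Finset (Fin m)) (hJ : IsX3C m trip J)
    (σ : Fin m → Fin (gnum K m))
    (hσ : Set.BijOn σ {i : Fin m | i ∉ J} Set.univ) :
    Popular (xE K m (gnum K m) trip) (xbA m) (xbH K m (gnum K m)) (xRk K m (gnum K m))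
      (xM K m trip J σ) :=
  x3c_cover_gives_popular_general m trip htrip J hJ σ hσ
end

section
/- Let G = (A ∪ H, E) be a finite bipartite graph with capacities b satisfying b(a) = 1 for all a ∈ A, let A = A_1 ∪ … ∪ A_p be a partition of A with target integers k_1,…,k_p, and suppose a partition matching of G exists. If M is a maximum b-matching of G that matches fewer than k_i vertices of A_i for some i, then there exists an improving sequence with respect to M (for the index i). -/
open Finset

section MatchingCore

variable {A H : Type*} [DecidableEq A] [DecidableEq H]

/-- `M` is a maximum b-matching: a b-matching of the largest possible cardinality. -/
def IsMaxBM (E : Finset (A × H)) (bA : A → ℕ) (bH : H → ℕ) (M : Finset (A × H)) : Prop :=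
  IsBM E bA bH M ∧ ∀ M' : Finset (A × H), IsBM E bA bH M' → M'.card ≤ M.card

/-- Agent `a` is matched in `M`. -/
def Matched (M : Finset (A × H)) (a : A) : Prop := ∃ h : H, (a, h) ∈ M

/-- An `M`-alternating path from an agent to an agent, with vertex sequence
`a 0, h 0, a 1, h 1, …, h t, a (t+1)`, beginning with an edge not in `M` and ending with
an edge of `M`, with no edge repeated. -/
structure AltAA (E M : Finset (A × H)) (t : ℕ) where
  a : Fin (t + 2) → A
  h : Fin (t + 1) → H
  fwd_mem : ∀ i : Fin (t + 1), (a i.castSucc, h i) ∈ E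
  fwd_not : ∀ i : Fin (t + 1), (a i.castSucc, h i) ∉ M
  bwd_mem : ∀ i : Fin (t + 1), (a i.succ, h i) ∈ M
  fwd_inj : ∀ i j : Fin (t + 1), (a i.castSucc, h i) = (a j.castSucc, h j) → i = j
  bwd_inj : ∀ i j : Fin (t + 1), (a i.succ, h i) = (a j.succ, h j) → i = j

namespace AltAA

variable {E M : Finset (A × H)} {t : ℕ}

/-- The first agent of an alternating path. -/
def first (P : AltAA E M t) : A := P.a 0

/-- The last agent of an alternating path. -/
def last (P : AltAA E M t) : A := P.a (Fin.last (t + 1))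

/-- The edge set of an alternating path. -/
def edges (P : AltAA E M t) : Finset (A × H) :=
  (Finset.univ.image fun i : Fin (t + 1) => (P.a i.castSucc, P.h i)) ∪
    (Finset.univ.image fun i : Fin (t + 1) => (P.a i.succ, P.h i))

end AltAA

open Classical in
/-- The number of vertices of the part `A_i` (the fiber of `part` over `i`) that are
matched in `M`. -/
noncomputable def nMatched [Fintype A] {p : ℕ} (part : A → Fin p) (M : Finset (A × H)) (i : Fin p) :
    ℕ :=
  (Finset.univ.filter fun a : A => part a = i ∧ ∃ h : H, (a, h) ∈ M).card

/-- A partition matching: a maximum b-matching (all agents having capacity 1) that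
matches at least `kk i` vertices of the part `A_i` for every `i`. -/
def IsPartitionMatching [Fintype A] (E : Finset (A × H)) (bH : H → ℕ) {p : ℕ}
    (part : A → Fin p) (kk : Fin p → ℕ) (M : Finset (A × H)) : Prop :=
  IsMaxBM E (fun _ => 1) bH M ∧ ∀ i : Fin p, kk i ≤ nMatched part M i

/-- An improving sequence for the index `i` with respect to `M`: a sequence of pairwise
edge-disjoint `M`-alternating paths `P 0, …, P s`, each beginning with a non-`M`-edge and
ending with an `M`-edge, whose first agent is an unmatched vertex of `A_i`, whose last
agent lies in a part `A_{i'}` in which `M` matches strictly more than `kk i'` vertices,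
and such that consecutive paths link up inside a common part as prescribed. -/
structure ImpSeq [Fintype A] (E M : Finset (A × H)) {p : ℕ} (part : A → Fin p)
    (kk : Fin p → ℕ) (i : Fin p) where
  s : ℕ
  P : Fin (s + 1) → (t : ℕ) × AltAA E M t
  disj : ∀ j j' : Fin (s + 1), j ≠ j' → Disjoint (P j).2.edges (P j').2.edges
  startPart : part (P 0).2.first = i
  startUnmatched : ¬ Matched M (P 0).2.first
  endExceeds :
    kk (part (P (Fin.last s)).2.last) < nMatched part M (part (P (Fin.last s)).2.last)
  chain : ∀ j : Fin s,
    part ((P j.castSucc).2.last) = part ((P j.succ).2.first) ∧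
      ((P j.castSucc).2.last = (P j.succ).2.first ∨ ¬ Matched M ((P j.succ).2.first))

end MatchingCore

/-!
Call an agent reachable if it ends a chain of one-hop alternating paths `a – h – a'`
(`(a, h) ∈ E \ M`, `(a', h) ∈ M`) that satisfies every condition of an improving sequence except
the one on its last part. Cutting out the part of a chain between two paths with the same end, or
with the same non-`M` edge, leaves a chain; so a shortest one has edge-disjoint paths, and if it
ends in a part with a surplus it is an improving sequence.

A reachable agent in a part with a surplus exists: shifting `M` along the last run of a shortest
chain frees its end without changing any house load, so, `M` being maximum, every house joined
to a launchable agent (one at which a further path may start) is saturated by `M`, and its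
`M`-partners are reachable. Let `T` be the parts met by the search. Every agent of `T` matched by
the partition matching `M₀` is launchable or is matched by `M` without being reachable, and `M₀`
puts the launchable ones into saturated houses, so there are at most as many of them as reachable
agents. Hence `M` matches at least as many agents of `T` as `M₀`, which is impossible if no part
of `T` has a surplus.
-/

theorem List.exists_split_of_not_nodup_map {α β : Type*} {f : α → β} {l : List α}
    (h : ¬(l.map f).Nodup) : ∃ l₁ x l₂ y l₃, l = l₁ ++ x :: (l₂ ++ y :: l₃) ∧ f x = f y := by
  rw [List.Nodup, List.pairwise_map, List.pairwise_iff_forall_sublist] at h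
  push Not at h
  obtain ⟨x, y, hxy, heq⟩ := h
  obtain ⟨r₁, r₂, rfl, hx, hy⟩ := List.cons_sublist_iff.mp hxy
  obtain ⟨l₁, l₂, rfl⟩ := List.append_of_mem hx
  obtain ⟨l₂', l₃, rfl⟩ := List.append_of_mem (List.singleton_sublist.mp hy)
  exact ⟨l₁, x, l₂ ++ l₂', y, l₃, by simp, heq⟩

theorem List.getLast?_append_cons_append_cons {α : Type*} (l₁ l₂ l₃ : List α) (x y : α) :
    (l₁ ++ x :: (l₂ ++ y :: l₃)).getLast? = (y :: l₃).getLast? := by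
  rw [← List.cons_append, ← List.append_assoc, List.getLast?_append_cons]

theorem List.IsChain.shortcut_left {α : Type*} {R : α → α → Prop} {l₁ l₂ l₃ : List α} {x y : α}
    (h : (l₁ ++ x :: (l₂ ++ y :: l₃)).IsChain R) (hxy : ∀ {z}, R y z → R x z) :
    (l₁ ++ x :: l₃).IsChain R := by
  obtain ⟨h₁, h₂⟩ := List.isChain_split.mp h
  rw [← List.cons_append] at h₂
  exact List.isChain_split.mpr ⟨h₁, (List.isChain_split.mp h₂).2.imp_head hxy⟩

theorem List.IsChain.shortcut_right {α : Type*} {R : α → α → Prop} {l₁ l₂ l₃ : List α} {x y : α}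
    (h : (l₁ ++ x :: (l₂ ++ y :: l₃)).IsChain R) (hxy : ∀ {z}, R z x → R z y) :
    (l₁ ++ y :: l₃).IsChain R := by
  obtain ⟨h₁, h₂⟩ := List.isChain_split.mp h
  rw [← List.cons_append] at h₂
  obtain ⟨h₁, -, hlast⟩ := List.isChain_append.mp h₁
  refine List.isChain_split.mpr
    ⟨h₁.append (List.isChain_singleton _) ?_, (List.isChain_split.mp h₂).2⟩
  simpa using fun z hz => hxy (hlast z hz x rfl)

theorem List.Nodup.apply_get_ne {α β : Type*} {f : α → β} {l : List α} (h : (l.map f).Nodup)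
    {j j' : Fin l.length} (hjj' : j ≠ j') : f (l.get j) ≠ f (l.get j') := fun heq =>
  hjj' (Fin.ext ((h.getElem_inj_iff (hi := by simp) (hj := by simp)).mp (by simpa using heq)))

lemma card_filter_snd_mem {A H : Type*} [DecidableEq H] (N : Finset (A × H)) (W : Finset H) :
    (N.filter fun e => e.2 ∈ W).card = ∑ h ∈ W, hdeg N h := by
  rw [card_eq_sum_card_fiberwise (s := N.filter fun e => e.2 ∈ W) (f := Prod.snd) (t := W)
    fun e he => (mem_filter.mp he).2]
  refine sum_congr rfl fun h hh => congrArg card ?_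
  ext e
  simp only [mem_filter]
  exact ⟨fun ⟨⟨he, _⟩, h2⟩ => ⟨he, h2⟩, fun ⟨he, h2⟩ => ⟨⟨he, h2 ▸ hh⟩, h2⟩⟩

lemma card_filter_part_mem_matched {A H : Type*} [Fintype A] {p : ℕ} (part : A → Fin p)
    (N : Finset (A × H)) (T : Finset (Fin p)) [DecidablePred (Matched N)] :
    (univ.filter fun a => part a ∈ T ∧ Matched N a).card = ∑ t ∈ T, nMatched part N t := by
  classical
  rw [card_eq_sum_card_fiberwise (s := univ.filter fun a => part a ∈ T ∧ Matched N a)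
    (f := part) (t := T) fun a ha => (mem_filter.mp ha).2.1]
  refine sum_congr rfl fun t ht => ?_
  unfold nMatched
  refine congrArg card (Finset.ext fun a => ?_)
  simp only [mem_filter, mem_univ, true_and]
  exact ⟨fun ⟨⟨_, hm⟩, hp⟩ => ⟨hp, hm⟩, fun ⟨hp, hm⟩ => ⟨⟨hp ▸ ht, hm⟩, hp⟩⟩

section Chains

variable {A H : Type*}

/-- The one-hop alternating path `src – house – dst`. -/
structure AltStep (A H : Type*) where
  src : A
  house : H
  dst : A

namespace AltStep

def fwd (x : AltStep A H) : A × H := (x.src, x.house)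

def bwd (x : AltStep A H) : A × H := (x.dst, x.house)

def IsAlt (E M : Finset (A × H)) (x : AltStep A H) : Prop :=
  x.fwd ∈ E ∧ x.fwd ∉ M ∧ x.bwd ∈ M

end AltStep

variable {p : ℕ}

def Linked (M : Finset (A × H)) (part : A → Fin p) (b a : A) : Prop :=
  part b = part a ∧ (b = a ∨ ¬Matched M a)

/-- An improving sequence of one-hop paths, except for the conditions on its last part and on
disjointness. -/
structure IsImpChain (E M : Finset (A × H)) (part : A → Fin p) (i : Fin p)
    (c : List (AltStep A H)) : Prop where
  alt : ∀ x ∈ c, x.IsAlt E M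
  chain : c.IsChain fun x y => Linked M part x.dst y.src
  start : ∀ a ∈ (c.map AltStep.src).head?, ¬Matched M a ∧ part a = i

inductive Reachable (E M : Finset (A × H)) (part : A → Fin p) (i : Fin p) : A → Prop
  | start {a a' : A} {h : H} : ¬Matched M a → part a = i → (AltStep.mk a h a').IsAlt E M →
      Reachable E M part i a'
  | step {b a a' : A} {h : H} : Reachable E M part i b → Linked M part b a →
      (AltStep.mk a h a').IsAlt E M → Reachable E M part i a'

variable {E M : Finset (A × H)} {part : A → Fin p} {i : Fin p}

namespace IsImpChain

variable {l₁ l₂ l₃ : List (AltStep A H)} {x y : AltStep A H}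

lemma of_append (hc : IsImpChain E M part i (l₁ ++ l₂)) : IsImpChain E M part i l₁ where
  alt z hz := hc.alt z (List.mem_append_left _ hz)
  chain := hc.chain.left_of_append
  start a ha := hc.start a (by cases l₁ <;> simp_all)

lemma shortcut_dst (hc : IsImpChain E M part i (l₁ ++ x :: (l₂ ++ y :: l₃)))
    (hxy : x.dst = y.dst) : IsImpChain E M part i (l₁ ++ x :: l₃) where
  alt z hz := hc.alt z (by simp only [List.mem_append, List.mem_cons] at hz ⊢; tauto)
  chain := hc.chain.shortcut_left (by rw [hxy]; exact id)
  start a ha := hc.start a (by cases l₁ <;> simp_all)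

lemma shortcut_src (hc : IsImpChain E M part i (l₁ ++ x :: (l₂ ++ y :: l₃)))
    (hxy : x.src = y.src) : IsImpChain E M part i (l₁ ++ y :: l₃) where
  alt z hz := hc.alt z (by simp only [List.mem_append, List.mem_cons] at hz ⊢; tauto)
  chain := hc.chain.shortcut_right (by rw [hxy]; exact id)
  start a ha := hc.start a (by cases l₁ <;> simp_all)

end IsImpChain

lemma Reachable.exists_isImpChain {a : A} (ha : Reachable E M part i a) :
    ∃ c, IsImpChain E M part i c ∧ a ∈ (c.map AltStep.dst).getLast? := by
  induction ha with
  | start hunm hpart hx =>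
    refine ⟨[⟨_, _, _⟩], ⟨by simpa using hx, List.isChain_singleton _, ?_⟩, by simp⟩
    simpa using ⟨hunm, hpart⟩
  | @step b a a' h _ hlink hx ih =>
    obtain ⟨c, hc, hb⟩ := ih
    refine ⟨c ++ [⟨a, h, a'⟩], ⟨?_, ?_, ?_⟩, by simp⟩
    · simpa [or_imp, forall_and] using ⟨hc.alt, hx⟩
    · refine hc.chain.append (List.isChain_singleton _) fun z hz w hw => ?_
      rw [List.getLast?_map] at hb
      obtain rfl : w = ⟨a, h, a'⟩ := by simpa using hw.symm
      obtain ⟨z', hz', rfl⟩ := Option.mem_map.mp hb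
      exact (Option.mem_unique hz hz') ▸ hlink
    · intro a₀ ha₀
      exact hc.start a₀ (by cases c <;> simp_all)

lemma IsImpChain.exists_nodup {a : A} {c : List (AltStep A H)} (hc : IsImpChain E M part i c)
    (ha : a ∈ (c.map AltStep.dst).getLast?) :
    ∃ c', IsImpChain E M part i c' ∧ (c'.map AltStep.dst).Nodup ∧ (c'.map AltStep.fwd).Nodup ∧
      a ∈ (c'.map AltStep.dst).getLast? := by
  induction hlen : c.length using Nat.strong_induction_on generalizing c with
  | _ n ih =>
  by_cases hdst : (c.map AltStep.dst).Nodup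
  · by_cases hfwd : (c.map AltStep.fwd).Nodup
    · exact ⟨c, hc, hdst, hfwd, ha⟩
    obtain ⟨l₁, x, l₂, y, l₃, rfl, hxy⟩ := List.exists_split_of_not_nodup_map hfwd
    refine ih _ ?_ (hc.shortcut_src (congrArg Prod.fst hxy)) ?_ rfl
    · simp only [List.length_append, List.length_cons] at hlen ⊢; omega
    · rw [List.map_append, List.map_cons, List.getLast?_append_cons]
      simpa only [List.map_append, List.map_cons, List.getLast?_append_cons_append_cons] using ha
  obtain ⟨l₁, x, l₂, y, l₃, rfl, hxy⟩ := List.exists_split_of_not_nodup_map hdst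
  refine ih _ ?_ (hc.shortcut_dst hxy) ?_ rfl
  · simp only [List.length_append, List.length_cons] at hlen ⊢; omega
  · rw [List.map_append, List.map_cons, List.getLast?_append_cons, hxy]
    simpa only [List.map_append, List.map_cons, List.getLast?_append_cons_append_cons] using ha

/-- The agents at which a chain may start or be continued. -/
def Launchable (E M : Finset (A × H)) (part : A → Fin p) (i : Fin p) (a : A) : Prop :=
  (¬Matched M a ∧ part a = i) ∨ ∃ b, Reachable E M part i b ∧ Linked M part b a

def Entered (E M : Finset (A × H)) (part : A → Fin p) (i : Fin p) (h : H) : Prop :=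
  ∃ a, Launchable E M part i a ∧ (a, h) ∈ E ∧ (a, h) ∉ M

lemma reachable_iff_exists_entered {a : A} :
    Reachable E M part i a ↔ ∃ h, Entered E M part i h ∧ (a, h) ∈ M := by
  constructor
  · rintro (⟨hunm, hpart, hx⟩ | ⟨hb, hlink, hx⟩)
    · exact ⟨_, ⟨_, .inl ⟨hunm, hpart⟩, hx.1, hx.2.1⟩, hx.2.2⟩
    · exact ⟨_, ⟨_, .inr ⟨_, hb, hlink⟩, hx.1, hx.2.1⟩, hx.2.2⟩
  · rintro ⟨h, ⟨a₀, ⟨hunm, hpart⟩ | ⟨b, hb, hlink⟩, hE, hnM⟩, hm⟩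
    · exact .start hunm hpart ⟨hE, hnM, hm⟩
    · exact .step hb hlink ⟨hE, hnM, hm⟩

lemma Reachable.launchable {a : A} (ha : Reachable E M part i a) : Launchable E M part i a :=
  .inr ⟨a, ha, rfl, .inl rfl⟩

lemma Launchable.reachable_of_matched {a : A} (hl : Launchable E M part i a)
    (hm : Matched M a) : Reachable E M part i a := by
  rcases hl with ⟨hunm, -⟩ | ⟨b, hb, -, rfl | hunm⟩
  · exact absurd hm hunm
  · exact hb
  · exact absurd hm hunm

lemma Reachable.matched {a : A} (ha : Reachable E M part i a) : Matched M a :=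
  let ⟨h, _, hm⟩ := reachable_iff_exists_entered.mp ha
  ⟨h, hm⟩

end Chains

section BMatching

lemma snd_eq_of_adeg_le_one {A H : Type*} [DecidableEq A] {M : Finset (A × H)} {a : A}
    (h1 : adeg M a ≤ 1) {h h' : H} (hm : (a, h) ∈ M) (hm' : (a, h') ∈ M) : h = h' :=
  congrArg Prod.snd (card_le_one.mp h1 _ (mem_filter.mpr ⟨hm, rfl⟩) _ (mem_filter.mpr ⟨hm', rfl⟩))

variable {A H : Type*} [DecidableEq A] [DecidableEq H]

lemma IsBM.mono {E M M' : Finset (A × H)} {bA : A → ℕ} {bH : H → ℕ} (hM : IsBM E bA bH M)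
    (h : M' ⊆ M) : IsBM E bA bH M' :=
  ⟨h.trans hM.1, fun a => (card_le_card (filter_subset_filter _ h)).trans (hM.2.1 a),
    fun x => (card_le_card (filter_subset_filter _ h)).trans (hM.2.2 x)⟩

lemma IsBM.insert_edge {E M : Finset (A × H)} {bH : H → ℕ} {a : A} {h : H}
    (hM : IsBM E (fun _ => 1) bH M) (hE : (a, h) ∈ E) (ha : ¬Matched M a)
    (hh : hdeg M h < bH h) : IsBM E (fun _ => 1) bH (insert (a, h) M) := by
  refine ⟨insert_subset hE hM.1, fun x => ?_, fun y => ?_⟩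
  · unfold adeg
    rw [filter_insert]
    split_ifs with hx
    · subst hx
      have : M.filter (fun e => e.1 = a) = ∅ :=
        filter_eq_empty_iff.mpr fun e he hea => ha ⟨e.2, hea ▸ he⟩
      simp [this]
    · exact hM.2.1 x
  · unfold hdeg
    rw [filter_insert]
    split_ifs with hy
    · subst hy
      exact (card_insert_le _ _).trans hh
    · exact hM.2.2 y

lemma hdeg_insert_erase {M : Finset (A × H)} {a b : A} {h : H} (ha : (a, h) ∉ M)
    (hb : (b, h) ∈ M) : hdeg (insert (a, h) (M.erase (b, h))) = hdeg M := by
  funext y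
  unfold hdeg
  rw [filter_insert, filter_erase]
  split_ifs with hy
  · subst hy
    rw [card_insert_of_notMem (by simp [ha]), card_erase_add_one (by simp [hb])]
  · rw [erase_eq_of_notMem (by simp [hy])]

lemma not_matched_insert_erase {M : Finset (A × H)} {a b : A} {h : H} (h1 : adeg M b ≤ 1)
    (hb : (b, h) ∈ M) (hab : a ≠ b) : ¬Matched (insert (a, h) (M.erase (b, h))) b := by
  rintro ⟨h', hm⟩
  rcases mem_insert.mp hm with heq | hm
  · exact hab (congrArg Prod.fst heq).symm
  · exact ne_of_mem_erase hm (by rw [snd_eq_of_adeg_le_one h1 (mem_of_mem_erase hm) hb])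

def IsRematching (E : Finset (A × H)) (bH : H → ℕ) (M M' : Finset (A × H)) : Prop :=
  IsBM E (fun _ => 1) bH M' ∧ M'.card = M.card ∧ hdeg M' = hdeg M

lemma IsRematching.trans {E M M' M'' : Finset (A × H)} {bH : H → ℕ}
    (h : IsRematching E bH M M') (h' : IsRematching E bH M' M'') : IsRematching E bH M M'' :=
  ⟨h'.1, h'.2.1.trans h.2.1, h'.2.2.trans h.2.2⟩

lemma IsBM.isRematching_swap {E M : Finset (A × H)} {bH : H → ℕ} {a b : A} {h : H}
    (hM : IsBM E (fun _ => 1) bH M) (hE : (a, h) ∈ E) (ha : ¬Matched M a) (hb : (b, h) ∈ M) :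
    IsRematching E bH M (insert (a, h) (M.erase (b, h))) := by
  have hah : (a, h) ∉ M.erase (b, h) := fun hm => ha ⟨h, mem_of_mem_erase hm⟩
  have hdeg_erase : hdeg (M.erase (b, h)) h + 1 = hdeg M h := by
    unfold hdeg
    rw [filter_erase, card_erase_add_one (by simp [hb])]
  refine ⟨(hM.mono (erase_subset _ _)).insert_edge hE
    (fun ⟨h', hm⟩ => ha ⟨h', mem_of_mem_erase hm⟩) (by have := hM.2.2 h; omega), ?_,
    hdeg_insert_erase (fun hm => ha ⟨h, hm⟩) hb⟩
  rw [card_insert_of_notMem hah, card_erase_add_one hb]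

lemma IsMaxBM.hdeg_eq_of_isRematching {E M M' : Finset (A × H)} {bH : H → ℕ} {a : A} {h : H}
    (hmax : IsMaxBM E (fun _ => 1) bH M) (hM' : IsRematching E bH M M')
    (ha : ¬Matched M' a) (hE : (a, h) ∈ E) : hdeg M h = bH h := by
  refine (hmax.1.2.2 h).antisymm (not_lt.mp fun hlt => ?_)
  have hins := hmax.2 _ (hM'.1.insert_edge hE ha (by rw [hM'.2.2]; exact hlt))
  rw [card_insert_of_notMem (fun hm => ha ⟨h, hm⟩), hM'.2.1] at hins
  omega

lemma IsRematching.refl {E M : Finset (A × H)} {bH : H → ℕ} (hM : IsBM E (fun _ => 1) bH M) :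
    IsRematching E bH M M :=
  ⟨hM, rfl, rfl⟩

variable {p : ℕ} {E M : Finset (A × H)} {part : A → Fin p} {i : Fin p}

/-- Only the last run of the chain, from its last `M`-unmatched start on, is shifted; this is why
distinct ends suffice. -/
lemma IsImpChain.exists_isRematching {bH : H → ℕ} (hM : IsBM E (fun _ => 1) bH M)
    {c : List (AltStep A H)} (hc : IsImpChain E M part i c) (hnd : (c.map AltStep.dst).Nodup)
    {a : A} (ha : a ∈ (c.map AltStep.dst).getLast?) :
    ∃ M', IsRematching E bH M M' ∧ ¬Matched M' a ∧
      ∀ e ∈ M, e.1 ∉ c.map AltStep.dst → e ∈ M' := by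
  induction c using List.reverseRecOn generalizing a with
  | nil => simp at ha
  | append_singleton l x ih =>
    obtain rfl : x.dst = a := by simpa using ha
    have hx := hc.alt x (by simp)
    have hnd' : (l.map AltStep.dst ++ [x.dst]).Nodup := by simpa using hnd
    have hxl : x.dst ∉ l.map AltStep.dst := fun h =>
      (List.nodup_append.mp hnd').2.2 _ h _ (List.mem_singleton_self _) rfl
    suffices ∃ M₁, IsRematching E bH M M₁ ∧ ¬Matched M₁ x.src ∧ x.bwd ∈ M₁ ∧
        ∀ e ∈ M, e.1 ∉ l.map AltStep.dst → e ∈ M₁ by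
      obtain ⟨M₁, hM₁, hsrc, hbwd, hkeep⟩ := this
      refine ⟨_, hM₁.trans (hM₁.1.isRematching_swap hx.1 hsrc hbwd), ?_, fun e he hne => ?_⟩
      · exact not_matched_insert_erase (hM₁.1.2.1 x.dst) hbwd
          fun h => hsrc ⟨x.house, by rw [h]; exact hbwd⟩
      · have hne' : e.1 ≠ x.dst := fun h => hne (by simp [h])
        exact mem_insert_of_mem (mem_erase.mpr ⟨fun h => hne' (by rw [h]),
          hkeep e he fun h => hne (by simp [h])⟩)
    by_cases hm : Matched M x.src
    · -- `x` continues the previous path, which ends at `x.src`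
      have hl : IsImpChain E M part i l := hc.of_append
      obtain ⟨b, hb⟩ : ∃ b, b ∈ (l.map AltStep.dst).getLast? := by
        cases l with
        | nil => exact absurd hm (hc.start x.src (by simp)).1
        | cons y l => exact ⟨_, rfl⟩
      obtain rfl : b = x.src := by
        rw [List.getLast?_map] at hb
        obtain ⟨y, hy, rfl⟩ := Option.mem_map.mp hb
        exact ((List.isChain_append.mp hc.chain).2.2 y hy x rfl).2.resolve_right (not_not.mpr hm)
      obtain ⟨M₁, hM₁, hunm, hkeep⟩ := ih hl hnd'.of_append_left hb
      exact ⟨M₁, hM₁, hunm, hkeep _ hx.2.2 hxl, hkeep⟩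
    · exact ⟨M, .refl hM, hm, hx.2.2, fun e he _ => he⟩

lemma Reachable.exists_isRematching {bH : H → ℕ} (hM : IsBM E (fun _ => 1) bH M) {a : A}
    (ha : Reachable E M part i a) : ∃ M', IsRematching E bH M M' ∧ ¬Matched M' a := by
  obtain ⟨c, hc, hend⟩ := ha.exists_isImpChain
  obtain ⟨c', hc', hdst, -, hend'⟩ := hc.exists_nodup hend
  obtain ⟨M', hM', hunm, -⟩ := hc'.exists_isRematching hM hdst hend'
  exact ⟨M', hM', hunm⟩

lemma Entered.hdeg_eq {bH : H → ℕ} (hmax : IsMaxBM E (fun _ => 1) bH M) {h : H}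
    (hh : Entered E M part i h) : hdeg M h = bH h := by
  obtain ⟨a, hl, hE, -⟩ := hh
  by_cases hm : Matched M a
  · obtain ⟨M', hM', hunm⟩ := (hl.reachable_of_matched hm).exists_isRematching hmax.1
    exact hmax.hdeg_eq_of_isRematching hM' hunm hE
  · exact hmax.hdeg_eq_of_isRematching (.refl hmax.1) hm hE

lemma Launchable.entered {a : A} {h : H} (hM1 : ∀ a, adeg M a ≤ 1)
    (hl : Launchable E M part i a) (hE : (a, h) ∈ E) : Entered E M part i h := by
  by_cases hm : (a, h) ∈ M
  · obtain ⟨h', hh', hm'⟩ := reachable_iff_exists_entered.mp (hl.reachable_of_matched ⟨h, hm⟩)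
    rwa [snd_eq_of_adeg_le_one (hM1 a) hm hm']
  · exact ⟨a, hl, hE, hm⟩

lemma card_launchable_matched_le [Fintype A] {bA : A → ℕ} {bH : H → ℕ} {M₀ : Finset (A × H)}
    (hM : IsMaxBM E (fun _ => 1) bH M) (hM₀ : IsBM E bA bH M₀)
    [DecidablePred (Launchable E M part i)] [DecidablePred (Reachable E M part i)]
    [DecidablePred (Matched M₀)] :
    (univ.filter fun a => Launchable E M part i a ∧ Matched M₀ a).card ≤
      (univ.filter (Reachable E M part i)).card := by
  classical
  set W := (E.image Prod.snd).filter (Entered E M part i)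
  calc (univ.filter fun a => Launchable E M part i a ∧ Matched M₀ a).card
      ≤ ((M₀.filter fun e => e.2 ∈ W).image Prod.fst).card := by
        refine card_le_card fun a ha => ?_
        obtain ⟨hl, h, hm⟩ := (mem_filter.mp ha).2
        have hE := hM₀.1 hm
        exact mem_image.mpr ⟨(a, h), mem_filter.mpr ⟨hm, mem_filter.mpr
          ⟨mem_image.mpr ⟨_, hE, rfl⟩, hl.entered hM.1.2.1 hE⟩⟩, rfl⟩
    _ ≤ ∑ h ∈ W, hdeg M₀ h := card_image_le.trans (card_filter_snd_mem M₀ W).le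
    _ ≤ ∑ h ∈ W, hdeg M h :=
        sum_le_sum fun h hh => (hM₀.2.2 h).trans ((mem_filter.mp hh).2.hdeg_eq hM).ge
    _ = (M.filter fun e => e.2 ∈ W).card := (card_filter_snd_mem M W).symm
    _ ≤ (univ.filter (Reachable E M part i)).card := by
        refine card_le_card_of_injOn Prod.fst (fun e he => ?_) fun e he e' he' hfst => ?_
        · obtain ⟨hm, hW⟩ := mem_filter.mp he
          exact mem_filter.mpr ⟨mem_univ _, reachable_iff_exists_entered.mpr
            ⟨e.2, (mem_filter.mp hW).2, hm⟩⟩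
        · have hm := (mem_filter.mp he).1
          have hm' := (mem_filter.mp he').1
          rw [Finset.mem_coe] at *
          exact Prod.ext hfst (snd_eq_of_adeg_le_one (hM.1.2.1 e.1) hm (hfst ▸ hm'))

lemma card_matched_le_of_launchable [Fintype A] {bA : A → ℕ} {bH : H → ℕ}
    {M₀ : Finset (A × H)} (hM : IsMaxBM E (fun _ => 1) bH M) (hM₀ : IsBM E bA bH M₀)
    (T : Finset (Fin p)) (hRT : ∀ a, Reachable E M part i a → part a ∈ T)
    (hT : ∀ a, part a ∈ T → ¬Matched M a → Launchable E M part i a)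
    [DecidablePred (Matched M)] [DecidablePred (Matched M₀)] :
    (univ.filter fun a => part a ∈ T ∧ Matched M₀ a).card ≤
      (univ.filter fun a => part a ∈ T ∧ Matched M a).card := by
  classical
  set R := univ.filter (Reachable E M part i)
  set Y := univ.filter fun a => part a ∈ T ∧ Matched M a
  have hRY : R ⊆ Y := fun a ha => by
    have ha := (mem_filter.mp ha).2
    exact mem_filter.mpr ⟨mem_univ _, hRT a ha, ha.matched⟩
  calc _ ≤ (univ.filter fun a => Launchable E M part i a ∧ Matched M₀ a).card + (Y \ R).card := by
        refine (card_le_card fun a ha => ?_).trans (card_union_le _ _)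
        obtain ⟨hTa, hm₀⟩ := (mem_filter.mp ha).2
        by_cases hl : Launchable E M part i a
        · exact mem_union_left _ (mem_filter.mpr ⟨mem_univ _, hl, hm₀⟩)
        exact mem_union_right _ (mem_sdiff.mpr ⟨mem_filter.mpr ⟨mem_univ _, hTa,
          not_not.mp fun hunm => hl (hT a hTa hunm)⟩, fun hR => hl (mem_filter.mp hR).2.launchable⟩)
    _ ≤ R.card + (Y \ R).card := Nat.add_le_add_right (card_launchable_matched_le hM hM₀) _
    _ = Y.card := by rw [add_comm, card_sdiff_add_card_eq_card hRY]

lemma exists_reachable_surplus [Fintype A] {bA : A → ℕ} {bH : H → ℕ} {kk : Fin p → ℕ}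
    {M₀ : Finset (A × H)} (hM : IsMaxBM E (fun _ => 1) bH M) (hM₀ : IsBM E bA bH M₀)
    (hM₀k : ∀ t, kk t ≤ nMatched part M₀ t) (hdef : nMatched part M i < kk i) :
    ∃ a, Reachable E M part i a ∧ kk (part a) < nMatched part M (part a) := by
  classical
  by_contra! hcon
  set T := univ.filter fun t => t = i ∨ ∃ a, Reachable E M part i a ∧ part a = t
  have hle := card_matched_le_of_launchable hM hM₀ T
    (fun a ha => mem_filter.mpr ⟨mem_univ _, .inr ⟨a, ha, rfl⟩⟩) fun a ha hunm => by
      obtain rfl | ⟨b, hb, hpart⟩ := (mem_filter.mp ha).2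
      exacts [.inl ⟨hunm, rfl⟩, .inr ⟨b, hb, hpart, .inr hunm⟩]
  rw [card_filter_part_mem_matched, card_filter_part_mem_matched] at hle
  have hlt : ∑ t ∈ T, nMatched part M t < ∑ t ∈ T, nMatched part M₀ t :=
    calc ∑ t ∈ T, nMatched part M t < ∑ t ∈ T, kk t := by
          refine sum_lt_sum (fun t ht => ?_) ⟨i, by simp [T], hdef⟩
          obtain rfl | ⟨a, ha, rfl⟩ := (mem_filter.mp ht).2
          exacts [hdef.le, hcon a ha]
      _ ≤ ∑ t ∈ T, nMatched part M₀ t := sum_le_sum fun t _ => hM₀k t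
  omega

def AltStep.toPath (x : AltStep A H) (hx : x.IsAlt E M) : AltAA E M 0 where
  a := ![x.src, x.dst]
  h := ![x.house]
  fwd_mem j := by fin_cases j; exact hx.1
  fwd_not j := by fin_cases j; exact hx.2.1
  bwd_mem j := by fin_cases j; exact hx.2.2
  fwd_inj j j' _ := Subsingleton.elim (α := Fin 1) j j'
  bwd_inj j j' _ := Subsingleton.elim (α := Fin 1) j j'

lemma AltStep.edges_toPath (x : AltStep A H) (hx : x.IsAlt E M) :
    (x.toPath hx).edges = {x.fwd, x.bwd} := by
  ext e
  simp [AltAA.edges, toPath, fwd, bwd]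

lemma IsImpChain.nonempty_impSeq [Fintype A] {kk : Fin p → ℕ} {c : List (AltStep A H)}
    (hc : IsImpChain E M part i c) (hdst : (c.map AltStep.dst).Nodup)
    (hfwd : (c.map AltStep.fwd).Nodup) {a : A} (ha : a ∈ (c.map AltStep.dst).getLast?)
    (hsur : kk (part a) < nMatched part M (part a)) : Nonempty (ImpSeq E M part kk i) := by
  obtain _ | ⟨x, l⟩ := c
  · simp at ha
  refine ⟨{ s := l.length
            P := fun j => ⟨0, ((x :: l).get j).toPath (hc.alt _ (List.get_mem _ _))⟩
            disj := fun j j' hjj' => ?_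
            startPart := (hc.start x.src (by simp)).2
            startUnmatched := (hc.start x.src (by simp)).1
            endExceeds := ?_
            chain := fun j => List.isChain_iff_getElem.mp hc.chain j (by simp) }⟩
  · have hx := hc.alt _ (List.get_mem (x :: l) j)
    have hx' := hc.alt _ (List.get_mem (x :: l) j')
    rw [AltStep.edges_toPath, AltStep.edges_toPath, disjoint_left]
    intro e he he'
    simp only [mem_insert, mem_singleton] at he he'
    rcases he with rfl | rfl <;> rcases he' with h | h
    · exact hfwd.apply_get_ne hjj' h
    · exact hx.2.1 (by rw [h]; exact hx'.2.2)
    · exact hx'.2.1 (by rw [← h]; exact hx.2.2)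
    · exact hdst.apply_get_ne hjj' (congrArg Prod.fst h)
  · rw [List.getLast?_map, List.getLast?_eq_getElem?] at ha
    obtain rfl : ((x :: l).get (Fin.last l.length)).dst = a := by simpa using ha
    exact hsur

end BMatching

theorem improving_sequence_exists_general
    {A H : Type*} [Fintype A] [DecidableEq A] [DecidableEq H]
    (E : Finset (A × H)) (bH : H → ℕ) {p : ℕ} (part : A → Fin p) (kk : Fin p → ℕ)
    (hex : ∃ M0 : Finset (A × H), IsPartitionMatching E bH part kk M0)
    (M : Finset (A × H)) (hM : IsMaxBM E (fun _ => 1) bH M)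
    (i : Fin p) (hdef : nMatched part M i < kk i) :
    Nonempty (ImpSeq E M part kk i) := by
  obtain ⟨M0, hM0, hM0k⟩ := hex
  obtain ⟨a, ha, hsur⟩ := exists_reachable_surplus hM hM0.1 hM0k hdef
  obtain ⟨c, hc, hend⟩ := ha.exists_isImpChain
  obtain ⟨c', hc', hdst, hfwd, hend'⟩ := hc.exists_nodup hend
  exact hc'.nonempty_impSeq hdst hfwd hend' hsur

/-- If a partition matching exists and `M` is a maximum b-matching
matching fewer than `kk i` vertices of the part `A_i`, then there is an improving
sequence for index `i` with respect to `M`. -/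
theorem improving_sequence_exists
    {A H : Type*} [Fintype A] [Fintype H] [DecidableEq A] [DecidableEq H]
    (E : Finset (A × H)) (bH : H → ℕ) {p : ℕ} (part : A → Fin p) (kk : Fin p → ℕ)
    (hex : ∃ M0 : Finset (A × H), IsPartitionMatching E bH part kk M0)
    (M : Finset (A × H)) (hM : IsMaxBM E (fun _ => 1) bH M)
    (i : Fin p) (hdef : nMatched part M i < kk i) :
    Nonempty (ImpSeq E M part kk i) :=
  improving_sequence_exists_general E bH part kk hex M hM i hdef
end
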